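/- arXiv:2209.05114 — 5 statements merged into one kernel-verified Lean document; each statement's English description precedes it below -/
import Mathlib

section
/- Let F = [c_1,...,c_m] be an n × m Ferrers diagram and let 1 ≤ r ≤ min{n,m}. If κ(F,r) ≥ 1, then |D_i ∩ F| = i for all 1 ≤ i ≤ r, where D_i is the i-th diagonal of the board. -/
/-- The `n × m` matrix board `[n] × [m]` (1-based). -/
def board (n m : ℕ) : Finset (ℕ × ℕ) := Finset.Icc 1 n ×ˢ Finset.Icc 1 m

/-- `F` is an `n × m` Ferrers diagram: contained in the board, contains `(1,1)` and `(n,m)`,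
right-aligned and top-aligned. -/
def IsFerrers (n m : ℕ) (F : Finset (ℕ × ℕ)) : Prop :=
  F ⊆ board n m ∧ (1, 1) ∈ F ∧ (n, m) ∈ F ∧
  (∀ i j, (i, j) ∈ F → j < m → (i, j + 1) ∈ F) ∧
  (∀ i j, (i, j) ∈ F → 1 < i → (i - 1, j) ∈ F)

/-- The `r`-th diagonal of the `n × m` board: `{(i,j) : j - i = m - r}`. -/
def diag (n m r : ℕ) : Finset (ℕ × ℕ) :=
  (board n m).filter (fun p => p.2 + r = p.1 + m)

/-- The height `c_t` of the `t`-th column of `F`. -/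
def colH (F : Finset (ℕ × ℕ)) (t : ℕ) : ℕ := (F.filter (fun p => p.2 = t)).card

/-- `κ_j(F,d) = Σ_{t=1}^{m-d+1+j} max{c_t - j, 0}` (truncated subtraction). -/
def kappaJ (F : Finset (ℕ × ℕ)) (m d j : ℕ) : ℕ :=
  ∑ t ∈ Finset.Icc 1 (m - d + 1 + j), (colH F t - j)

/-- `κ(F,d) = min_{0 ≤ j ≤ d-1} κ_j(F,d)`. -/
noncomputable def kappa (F : Finset (ℕ × ℕ)) (m d : ℕ) : ℕ :=
  sInf (kappaJ F m d '' Set.Iio d)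

/-- `Σ_{i=1}^{m+n-1} max{0, |D_i ∩ F| - (d-1)}` (truncated subtraction). -/
def diagSum (n m : ℕ) (F : Finset (ℕ × ℕ)) (d : ℕ) : ℕ :=
  ∑ i ∈ Finset.Icc 1 (m + n - 1), ((diag n m i ∩ F).card - (d - 1))

/-- The pair `(F,d)` is MDS-constructible. -/
def MDSConstructible (n m : ℕ) (F : Finset (ℕ × ℕ)) (d : ℕ) : Prop :=
  kappa F m d = diagSum n m F d

/-!
Since `κ_j(F,r) ≥ 1`, some column among the first `m - r + 1 + j` is taller than `j`, hence so is
column `m - r + 1 + j` itself, the columns being weakly increasing. The `a`-th cell of `D_i`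
lies in column `a + m - i = m - r + 1 + j` with `j = a - 1 + r - i < r`, and this column has
height at least `j + 1 ≥ a`; so all `i` cells of `D_i` lie in `F`.
-/

open Finset hiding diag

lemma card_image_Icc_prodMk_const (k t : ℕ) :
    ((Icc 1 k).image fun y => (y, t)).card = k := by
  rw [card_image_of_injective _ fun a b h => (Prod.mk.inj h).1, Nat.card_Icc,
    Nat.add_sub_cancel]

lemma diag_eq_image {n m i : ℕ} (hin : i ≤ n) (him : i ≤ m) :
    diag n m i = (Icc 1 i).image fun a => (a, a + m - i) := by
  ext ⟨a, b⟩
  simp only [diag, board, mem_filter, mem_product, mem_Icc, mem_image, Prod.mk.injEq]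
  constructor
  · rintro ⟨⟨⟨ha1, -⟩, -, hbm⟩, heq⟩
    exact ⟨a, ⟨ha1, by omega⟩, rfl, by omega⟩
  · rintro ⟨a, ⟨ha1, hai⟩, rfl, rfl⟩
    omega

lemma card_diag {n m i : ℕ} (hin : i ≤ n) (him : i ≤ m) : (diag n m i).card = i := by
  rw [diag_eq_image hin him, card_image_of_injective _ fun a b h => (Prod.mk.inj h).1,
    Nat.card_Icc, Nat.add_sub_cancel]

lemma kappa_le_kappaJ (F : Finset (ℕ × ℕ)) (m : ℕ) {d j : ℕ} (hj : j < d) :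
    kappa F m d ≤ kappaJ F m d j :=
  Nat.sInf_le ⟨j, hj, rfl⟩

lemma exists_lt_colH_of_kappaJ_pos {F : Finset (ℕ × ℕ)} {m d j : ℕ}
    (h : 0 < kappaJ F m d j) : ∃ t ∈ Icc 1 (m - d + 1 + j), j < colH F t := by
  obtain ⟨t, ht, hpos⟩ := exists_ne_zero_of_sum_ne_zero h.ne'
  exact ⟨t, ht, by omega⟩

namespace IsFerrers

variable {n m : ℕ} {F : Finset (ℕ × ℕ)}

lemma mem_of_le_fst (hF : IsFerrers n m F) {x t : ℕ} (hx : (x, t) ∈ F) {y : ℕ}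
    (hy : 1 ≤ y) (hyx : y ≤ x) : (y, t) ∈ F := by
  obtain ⟨k, rfl⟩ := Nat.exists_eq_add_of_le hyx
  induction k with
  | zero => exact hx
  | succ k ih => exact ih (by simpa using hF.2.2.2.2 _ t hx (by omega)) (by omega)

lemma mem_of_le_snd (hF : IsFerrers n m F) {x t : ℕ} (hx : (x, t) ∈ F) {t' : ℕ}
    (htt' : t ≤ t') (ht' : t' ≤ m) : (x, t') ∈ F := by
  induction t', htt' using Nat.le_induction with
  | base => exact hx
  | succ t' htt' ih => exact hF.2.2.2.1 x t' (ih (by omega)) (by omega)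

lemma mem_iff_le_colH (hF : IsFerrers n m F) {x : ℕ} (t : ℕ) (hx : 1 ≤ x) :
    (x, t) ∈ F ↔ x ≤ colH F t := by
  constructor
  · intro h
    rw [← card_image_Icc_prodMk_const x t]
    refine card_le_card fun p hp => ?_
    obtain ⟨y, hy, rfl⟩ := mem_image.mp hp
    exact mem_filter.mpr ⟨hF.mem_of_le_fst h (mem_Icc.mp hy).1 (mem_Icc.mp hy).2, rfl⟩
  · intro h
    by_contra hxF
    -- a cell `(y, t)` with `x ≤ y` would put `(x, t)` in `F`
    have hcol : F.filter (fun p => p.2 = t) ⊆ (Icc 1 (x - 1)).image fun y => (y, t) := by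
      rintro ⟨y, s⟩ hp
      obtain ⟨hpF, rfl⟩ := mem_filter.mp hp
      have hy := (mem_product.mp (hF.1 hpF)).1
      refine mem_image.mpr ⟨y, mem_Icc.mpr ⟨(mem_Icc.mp hy).1, ?_⟩, rfl⟩
      by_contra hxy
      exact hxF (hF.mem_of_le_fst hpF hx (by omega))
    have := card_le_card hcol
    rw [card_image_Icc_prodMk_const] at this
    unfold colH at h
    omega

lemma colH_mono (hF : IsFerrers n m F) {t t' : ℕ} (htt' : t ≤ t') (ht' : t' ≤ m) :
    colH F t ≤ colH F t' := by
  rcases Nat.eq_zero_or_pos (colH F t) with h0 | hpos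
  · omega
  · rw [← hF.mem_iff_le_colH t' hpos]
    exact hF.mem_of_le_snd ((hF.mem_iff_le_colH t hpos).mpr le_rfl) htt' ht'

lemma lt_colH_of_kappaJ_pos (hF : IsFerrers n m F) {d j : ℕ} (hdm : d ≤ m) (hjd : j < d)
    (h : 0 < kappaJ F m d j) : j < colH F (m - d + 1 + j) := by
  obtain ⟨t, ht, hjt⟩ := exists_lt_colH_of_kappaJ_pos h
  exact hjt.trans_le (hF.colH_mono (mem_Icc.mp ht).2 (by omega))

lemma diag_subset_of_kappa_pos (hF : IsFerrers n m F) {r i : ℕ} (hrm : r ≤ m)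
    (hk : 0 < kappa F m r) (hin : i ≤ n) (hir : i ≤ r) : diag n m i ⊆ F := by
  rw [diag_eq_image hin (hir.trans hrm)]
  intro p hp
  obtain ⟨a, ha, rfl⟩ := mem_image.mp hp
  obtain ⟨ha1, hai⟩ := mem_Icc.mp ha
  have hj : a - 1 + r - i < r := by omega
  have hcol := hF.lt_colH_of_kappaJ_pos hrm hj (hk.trans_le (kappa_le_kappaJ F m hj))
  have hcol_eq : m - r + 1 + (a - 1 + r - i) = a + m - i := by omega
  rw [hcol_eq] at hcol
  rw [hF.mem_iff_le_colH _ ha1]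
  omega

end IsFerrers

theorem diag_card_eq_of_kappa_pos_general (n m : ℕ) (F : Finset (ℕ × ℕ)) (hF : IsFerrers n m F)
    (r : ℕ) (hr2 : r ≤ min n m) (hk : 1 ≤ kappa F m r) :
    ∀ i, 1 ≤ i → i ≤ r → (diag n m i ∩ F).card = i := by
  intro i _ hir
  obtain ⟨hrn, hrm⟩ := le_min_iff.mp hr2
  rw [inter_eq_left.mpr (hF.diag_subset_of_kappa_pos hrm hk (hir.trans hrn) hir),
    card_diag (hir.trans hrn) (hir.trans hrm)]

theorem diag_card_eq_of_kappa_pos (n m : ℕ) (F : Finset (ℕ × ℕ)) (hF : IsFerrers n m F)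
    (r : ℕ) (hr1 : 1 ≤ r) (hr2 : r ≤ min n m) (hk : 1 ≤ kappa F m r) :
    ∀ i, 1 ≤ i → i ≤ r → (diag n m i ∩ F).card = i :=
  diag_card_eq_of_kappa_pos_general n m F hF r hr2 hk
end

section
/- Let F be an n × m Ferrers diagram with column heights c_1 ≤ ... ≤ c_m and let 1 ≤ d ≤ min{n,m}. Then κ(F,d) ≥ Σ_{i=1}^{m+n-1} max{0, |D_i ∩ F| - d + 1}. -/
/-!
Fix `j < d` and put `N = m - d + 1 + j`. Since `F` is top-aligned, `κ_j(F,d)` counts the points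
of `F` below row `j` and left of column `N + 1`. A diagonal meets every row and every column at
most once, so it loses at most `j` points in the top `j` rows and at most `m - N ≤ d - 1 - j`
points in the rightmost columns. Summing over the diagonals, which partition the board, gives
`Σ_i (|D_i ∩ F| - (d - 1)) ≤ κ_j(F,d)` for every `j`, hence for the minimum `κ(F,d)`.
-/

open Finset

lemma Finset.eq_Icc_one_card_of_pred_mem {A : Finset ℕ} (hpos : ∀ i ∈ A, 1 ≤ i)
    (hpred : ∀ i ∈ A, 1 < i → i - 1 ∈ A) : A = Icc 1 #A := by
  have hIcc : ∀ i ∈ A, Icc 1 i ⊆ A := by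
    intro i hi
    induction i with
    | zero => simp
    | succ k ih =>
      intro l hl
      rcases (mem_Icc.1 hl).2.eq_or_lt with rfl | hlt
      · exact hi
      · exact ih (hpred _ hi (by grind)) (mem_Icc.2 ⟨(mem_Icc.1 hl).1, by omega⟩)
  have hsub : A ⊆ Icc 1 #A := fun i hi =>
    mem_Icc.2 ⟨hpos i hi, by simpa using card_le_card (hIcc i hi)⟩
  exact eq_of_subset_of_card_le hsub (by simp)

lemma mem_board_iff {n m : ℕ} {p : ℕ × ℕ} :
    p ∈ board n m ↔ 1 ≤ p.1 ∧ p.1 ≤ n ∧ 1 ≤ p.2 ∧ p.2 ≤ m := by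
  simp only [board, mem_product, mem_Icc, and_assoc]

section Columns

variable {n m : ℕ} {F : Finset (ℕ × ℕ)}

lemma IsFerrers.filter_snd_eq (hF : IsFerrers n m F) (t : ℕ) :
    F.filter (·.2 = t) = Icc 1 (colH F t) ×ˢ {t} := by
  set A := (F.filter (·.2 = t)).image Prod.fst
  have hcol : F.filter (·.2 = t) = A ×ˢ {t} := by
    ext ⟨a, b⟩
    simp only [A, mem_filter, mem_product, mem_image, mem_singleton, Prod.exists]
    grind
  have hA : A = Icc 1 #A := by
    apply eq_Icc_one_card_of_pred_mem
    · simp only [A, mem_image, mem_filter]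
      rintro _ ⟨p, ⟨hpF, -⟩, rfl⟩
      exact (mem_board_iff.1 (hF.1 hpF)).1
    · simp only [A, mem_image, mem_filter]
      rintro _ ⟨p, ⟨hpF, rfl⟩, rfl⟩ hp1
      exact ⟨(p.1 - 1, p.2), ⟨hF.2.2.2.2 _ _ hpF hp1, rfl⟩, rfl⟩
  have hcard : colH F t = #A := by rw [colH, hcol, card_product, card_singleton, mul_one]
  rw [hcol, hcard, ← hA]

lemma IsFerrers.card_filter_snd_eq_lt_fst (hF : IsFerrers n m F) (t j : ℕ) :
    #(F.filter fun p => p.2 = t ∧ j < p.1) = colH F t - j := by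
  have hIoc : (Icc 1 (colH F t)).filter (j < ·) = Ioc j (colH F t) := by
    ext x
    simp only [mem_filter, mem_Icc, mem_Ioc]
    omega
  rw [← filter_filter, hF.filter_snd_eq, filter_product_left (j < ·), card_product,
    card_singleton, mul_one, hIoc, Nat.card_Ioc]

lemma IsFerrers.sum_colH_sub_eq_card (hF : IsFerrers n m F) (N j : ℕ) :
    ∑ t ∈ Icc 1 N, (colH F t - j) = #(F.filter fun p => p.2 ≤ N ∧ j < p.1) := by
  rw [card_eq_sum_card_fiberwise (f := Prod.snd) (t := Icc 1 N)]
  · refine sum_congr rfl fun t ht => ?_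
    rw [← hF.card_filter_snd_eq_lt_fst, filter_filter]
    congr 1
    refine filter_congr fun p _ => ?_
    grind
  · intro p hp
    have hp := mem_filter.1 (mem_coe.1 hp)
    exact mem_Icc.2 ⟨(mem_board_iff.1 (hF.1 hp.1)).2.2.1, hp.2.1⟩

end Columns

section Diagonals

variable {n m i : ℕ}

lemma mem_diag_iff {p : ℕ × ℕ} : p ∈ diag n m i ↔ p ∈ board n m ∧ p.2 + i = p.1 + m :=
  mem_filter

lemma injOn_fst_diag : Set.InjOn Prod.fst (diag n m i : Set (ℕ × ℕ)) := by
  intro p hp q hq h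
  rw [mem_coe, mem_diag_iff] at hp hq
  exact Prod.ext h (by omega)

lemma injOn_snd_diag : Set.InjOn Prod.snd (diag n m i : Set (ℕ × ℕ)) := by
  intro p hp q hq h
  rw [mem_coe, mem_diag_iff] at hp hq
  exact Prod.ext (by omega) h

lemma card_eq_sum_card_diag_inter {S : Finset (ℕ × ℕ)} (hS : S ⊆ board n m) :
    #S = ∑ i ∈ Icc 1 (m + n - 1), #(diag n m i ∩ S) := by
  rw [card_eq_sum_card_fiberwise (f := fun p => p.1 + m - p.2)]
  · refine sum_congr rfl fun i _ => congrArg card ?_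
    ext p
    simp only [mem_filter, mem_inter, mem_diag_iff]
    constructor
    · rintro ⟨hpS, rfl⟩
      have := mem_board_iff.1 (hS hpS)
      exact ⟨⟨hS hpS, by omega⟩, hpS⟩
    · rintro ⟨⟨-, hp⟩, hpS⟩
      exact ⟨hpS, by omega⟩
  · intro p hp
    have := mem_board_iff.1 (hS hp)
    simp only [coe_Icc, Set.mem_Icc]
    omega

lemma card_filter_fst_le_le {D : Finset (ℕ × ℕ)} (hD : D ⊆ diag n m i) (j : ℕ) :
    #(D.filter (·.1 ≤ j)) ≤ j := by
  calc #(D.filter (·.1 ≤ j)) ≤ #(Icc 1 j) := by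
        refine card_le_card_of_injOn Prod.fst (fun p hp => ?_)
          (injOn_fst_diag.mono fun p hp => hD (mem_filter.1 hp).1)
        have hp := mem_filter.1 (mem_coe.1 hp)
        exact mem_Icc.2 ⟨(mem_board_iff.1 (mem_diag_iff.1 (hD hp.1)).1).1, hp.2⟩
    _ = j := by simp

lemma card_filter_lt_snd_le {D : Finset (ℕ × ℕ)} (hD : D ⊆ diag n m i) (N : ℕ) :
    #(D.filter (N < ·.2)) ≤ m - N := by
  calc #(D.filter (N < ·.2)) ≤ #(Icc (N + 1) m) := by
        refine card_le_card_of_injOn Prod.snd (fun p hp => ?_)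
          (injOn_snd_diag.mono fun p hp => hD (mem_filter.1 hp).1)
        have hp := mem_filter.1 (mem_coe.1 hp)
        exact mem_Icc.2 ⟨hp.2, (mem_board_iff.1 (mem_diag_iff.1 (hD hp.1)).1).2.2.2⟩
    _ = m - N := by simp

lemma card_sub_le_card_filter_of_subset_diag {D : Finset (ℕ × ℕ)} (hD : D ⊆ diag n m i)
    (N j : ℕ) : #D - (j + (m - N)) ≤ #(D.filter fun p => p.2 ≤ N ∧ j < p.1) := by
  have hcover : D ⊆ D.filter (fun p => p.2 ≤ N ∧ j < p.1) ∪
      (D.filter (·.1 ≤ j) ∪ D.filter (N < ·.2)) := by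
    intro p hp
    simp only [mem_union, mem_filter, hp, true_and]
    omega
  have := (card_le_card hcover).trans (card_union_le _ _)
  have := card_union_le (D.filter (·.1 ≤ j)) (D.filter (N < ·.2))
  have := card_filter_fst_le_le hD j
  have := card_filter_lt_snd_le hD N
  omega

end Diagonals

lemma IsFerrers.diagSum_le_kappaJ {n m d j : ℕ} {F : Finset (ℕ × ℕ)} (hF : IsFerrers n m F)
    (hj : j < d) : diagSum n m F d ≤ kappaJ F m d j := by
  rw [kappaJ, hF.sum_colH_sub_eq_card,
    card_eq_sum_card_diag_inter ((filter_subset _ _).trans hF.1)]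
  refine sum_le_sum fun i _ => ?_
  rw [inter_filter]
  exact (tsub_le_tsub_left (by omega) _).trans
    (card_sub_le_card_filter_of_subset_diag inter_subset_left _ _)

lemma le_kappa_of_forall_le_kappaJ {F : Finset (ℕ × ℕ)} {m d k : ℕ} (hd : 1 ≤ d)
    (h : ∀ j < d, k ≤ kappaJ F m d j) : k ≤ kappa F m d :=
  le_csInf ⟨_, 0, hd, rfl⟩ (by rintro _ ⟨j, hj, rfl⟩; exact h j hj)

theorem kappa_ge_diagSum_general (n m d : ℕ) (F : Finset (ℕ × ℕ)) (hF : IsFerrers n m F)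
    (hd1 : 1 ≤ d) :
    diagSum n m F d ≤ kappa F m d :=
  le_kappa_of_forall_le_kappaJ hd1 fun _ hj => hF.diagSum_le_kappaJ hj

theorem kappa_ge_diagSum (n m d : ℕ) (F : Finset (ℕ × ℕ)) (hF : IsFerrers n m F)
    (hd1 : 1 ≤ d) (hd2 : d ≤ min n m) :
    diagSum n m F d ≤ kappa F m d :=
  kappa_ge_diagSum_general n m d F hF hd1
end

section
/- The number of n × m Ferrers diagrams F with m ≥ n ≥ 2 for which (F,2) is MDS-constructible equals ((m-n+1)/m) · C(m+n-2, n-1). In particular, the number of n × n Ferrers diagrams F for which (F,2) is MDS-constructible is the (n-1)-th Catalan number. -/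
open Finset

namespace MDSAux


def seqs : ℕ → Finset (List ℕ)
  | 0 => {[]}
  | (k+1) => (seqs k).biUnion (fun l => (Finset.Icc (max 1 l.headI) (k+1)).image (fun q => q :: l))

def A (m n : ℕ) : ℕ := ((seqs m).filter (fun l => l.headI = n)).card

lemma mem_seqs_succ {k : ℕ} {l : List ℕ} :
    l ∈ seqs (k+1) ↔ ∃ l' ∈ seqs k, ∃ q, (max 1 l'.headI ≤ q ∧ q ≤ k+1) ∧ l = q :: l' := by
  simp [seqs, Finset.mem_biUnion, Finset.mem_image, Finset.mem_Icc, eq_comm, and_assoc]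

lemma length_of_mem_seqs : ∀ {m : ℕ} {l : List ℕ}, l ∈ seqs m → l.length = m := by
  intro m
  induction m with
  | zero => intro l hl; simp [seqs] at hl; simp [hl]
  | succ k ih =>
    intro l hl
    rw [mem_seqs_succ] at hl
    obtain ⟨l', hl', q, _, rfl⟩ := hl
    simp [ih hl']

lemma headI_bounds {m : ℕ} {l : List ℕ} (hl : l ∈ seqs m) (hm : 1 ≤ m) :
    1 ≤ l.headI ∧ l.headI ≤ m := by
  obtain ⟨k, rfl⟩ := Nat.exists_eq_add_of_le hm
  rw [Nat.add_comm, mem_seqs_succ] at hl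
  obtain ⟨l', _, q, hq, rfl⟩ := hl
  have h1 : 1 ≤ q := le_trans (le_max_left _ _) hq.1
  simp only [List.headI_cons]
  omega

lemma A_succ (m n : ℕ) (hm : 1 ≤ m) (hn1 : 1 ≤ n) (hn : n ≤ m+1) :
    A (m+1) n = ∑ k ∈ Finset.Icc 1 n, A m k := by
  classical
  have hA : A (m+1) n = ((seqs m).filter (fun l => l.headI ≤ n)).card := by
    unfold A
    rw [show seqs (m+1) = (seqs m).biUnion
        (fun l => (Finset.Icc (max 1 l.headI) (m+1)).image (fun q => q :: l)) from rfl,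
      Finset.filter_biUnion]
    rw [Finset.card_biUnion]
    · rw [Finset.card_filter]
      apply Finset.sum_congr rfl
      intro l hl
      have hb := headI_bounds hl hm
      have : ((Finset.Icc (max 1 l.headI) (m+1)).image (fun q => q :: l)).filter
          (fun l => l.headI = n) = ((Finset.Icc (max 1 l.headI) (m+1)).filter
          (fun q => q = n)).image (fun q => q :: l) := by
        rw [Finset.filter_image]
        simp; rfl
      rw [this, Finset.filter_eq']
      by_cases h : l.headI ≤ n
      · have : n ∈ Finset.Icc (max 1 l.headI) (m+1) := by
          simp [Finset.mem_Icc]; omega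
        simp [this, h]
      · have : n ∉ Finset.Icc (max 1 l.headI) (m+1) := by
          simp [Finset.mem_Icc]; omega
        simp [this, h]
    · intro x hx y hy hxy
      simp only [Finset.disjoint_left]
      intro a ha ha'
      simp only [Finset.mem_filter, Finset.mem_image] at ha ha'
      obtain ⟨⟨q, _, rfl⟩, _⟩ := ha
      obtain ⟨⟨q', _, hq'⟩, _⟩ := ha'
      exact hxy (by injection hq' with h1 h2; exact h2.symm ▸ rfl)
  rw [hA]
  have : (seqs m).filter (fun l => l.headI ≤ n)
      = (seqs m).filter (fun l => l.headI ∈ Finset.Icc 1 n) := by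
    apply Finset.filter_congr
    intro l hl
    have := headI_bounds hl hm
    simp [Finset.mem_Icc]; omega
  rw [this]
  have key := Finset.card_eq_sum_card_fiberwise (f := fun l : List ℕ => l.headI)
    (s := (seqs m).filter (fun l => l.headI ∈ Finset.Icc 1 n)) (t := Finset.Icc 1 n)
    (fun x hx => (Finset.mem_filter.mp hx).2)
  rw [key]
  apply Finset.sum_congr rfl
  intro k hk
  unfold A
  congr 1
  rw [Finset.filter_filter]
  apply Finset.filter_congr
  intro l _
  constructor
  · rintro ⟨_, h⟩; exact h
  · intro h; exact ⟨h ▸ hk, h⟩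

lemma A_zero_of_gt (m n : ℕ) (hm : 1 ≤ m) (h : m < n) : A m n = 0 := by
  unfold A
  rw [Finset.card_eq_zero, Finset.filter_eq_empty_iff]
  intro l hl
  have := headI_bounds hl hm
  omega

lemma HS2 (m : ℕ) (hm : 1 ≤ m) :
    ∀ n, 1 ≤ n → ∑ k ∈ Finset.Icc 1 n, (m+k-2).choose m = (m+n-1).choose (m+1) := by
  intro n hn
  induction n, hn using Nat.le_induction with
  | base =>
    simp only [Finset.Icc_self, Finset.sum_singleton]
    have h2 : m + 1 - 2 = m - 1 := by omega
    rw [h2, Nat.choose_eq_zero_of_lt (by omega), Nat.choose_eq_zero_of_lt (by omega)]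
  | succ j hj ih =>
    rw [Finset.sum_Icc_succ_top (by omega : 1 ≤ j+1), ih]
    have e1 : m + (j+1) - 2 = m + j - 1 := by omega
    have e2 : m + (j+1) - 1 = (m + j - 1) + 1 := by omega
    rw [e1, e2, Nat.choose_succ_succ' (m+j-1) m]
    omega

lemma HS1 (m : ℕ) (hm : 1 ≤ m) :
    ∀ n, 1 ≤ n → ∑ k ∈ Finset.Icc 1 n, (m+k-2).choose (k-1) = (m+n-1).choose (n-1) := by
  intro n hn
  induction n, hn using Nat.le_induction with
  | base => simp
  | succ j hj ih =>
    rw [Finset.sum_Icc_succ_top (by omega : 1 ≤ j+1), ih]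
    have e1 : m + (j+1) - 2 = m + j - 1 := by omega
    have e2 : m + (j+1) - 1 = (m + j - 1) + 1 := by omega
    have e3 : (j + 1) - 1 = (j - 1) + 1 := by omega
    have e4 : m + j - 1 = m + (j - 1) + 1 - 1 := by omega
    rw [e1, e2, e3, Nat.choose_succ_succ' (m+j-1) (j-1)]

lemma seqs_one : seqs 1 = {[1]} := by
  rw [show seqs 1 = (seqs 0).biUnion
      (fun l => (Finset.Icc (max 1 l.headI) 1).image (fun q => q :: l)) from rfl]
  rfl

lemma A_closed : ∀ m, 1 ≤ m → ∀ n, 1 ≤ n → n ≤ m+1 →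
    A m n + (m+n-2).choose m = (m+n-2).choose (n-1) := by
  intro m hm
  induction m, hm using Nat.le_induction with
  | base =>
    intro n hn1 hn2
    interval_cases n
    · have : A 1 1 = 1 := by unfold A; rw [seqs_one]; rfl
      simp [this]
    · have : A 1 2 = 0 := by unfold A; rw [seqs_one]; rfl
      simp [this]
  | succ m hm ih =>
    intro n hn1 hn2
    rcases Nat.eq_or_lt_of_le hn2 with h1 | h1
    · rw [A_zero_of_gt _ _ (by omega) (by omega)]
      have e : n - 1 = m + 1 := by omega
      rw [e]
      omega
    · have hn' : n ≤ m + 1 := by omega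
      rw [A_succ m n hm hn1 hn']
      have key : ∑ k ∈ Finset.Icc 1 n, (A m k + (m+k-2).choose m)
          = ∑ k ∈ Finset.Icc 1 n, (m+k-2).choose (k-1) := by
        apply Finset.sum_congr rfl
        intro k hk
        simp only [Finset.mem_Icc] at hk
        exact ih k hk.1 (by omega)
      rw [Finset.sum_add_distrib, HS2 m hm n hn1, HS1 m hm n hn1] at key
      have e1 : m + 1 + n - 2 = m + n - 1 := by omega
      rw [e1]
      exact key

lemma A_mul (m n : ℕ) (hn : 2 ≤ n) (hmn : n ≤ m) :
    A m n * m = (m - n + 1) * (m+n-2).choose (n-1) := by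
  have hm : 1 ≤ m := by omega
  have hclosed := A_closed m hm n (by omega) (by omega)
  set M := m + n - 2 with hM
  have hsymm : M.choose (m-1) = M.choose (n-1) := by
    have : M - (n-1) = m - 1 := by omega
    rw [← this, Nat.choose_symm (by omega)]
  have hid : M.choose m * m = M.choose (n-1) * (n-1) := by
    have := Nat.choose_succ_right_eq M (m-1)
    have e : m - 1 + 1 = m := by omega
    rw [e] at this
    rw [this, hsymm]
    congr 1
    omega
  have hsum : M.choose (n-1) * m = M.choose (n-1) * (m-n+1) + M.choose (n-1) * (n-1) := by
    rw [← Nat.mul_add]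
    congr 1
    omega
  have expand : (A m n + M.choose m) * m = M.choose (n-1) * m := by rw [hclosed]
  rw [Nat.add_mul, hid, hsum] at expand
  have fin : A m n * m = M.choose (n-1) * (m-n+1) := by omega
  rw [fin, Nat.mul_comm]

lemma headI_eq_getD {l : List ℕ} (h : l ≠ []) : l.headI = l.getD 0 0 := by
  cases l with
  | nil => simp at h
  | cons a l => rfl

lemma mem_seqs_iff : ∀ m, 1 ≤ m → ∀ l : List ℕ,
    (l ∈ seqs m ↔ l.length = m ∧ (∀ i, i < m → 1 ≤ l.getD i 0 ∧ l.getD i 0 ≤ m - i) ∧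
      l.Chain' (· ≥ ·)) := by
  intro m hm
  induction m, hm using Nat.le_induction with
  | base =>
    intro l
    constructor
    · intro hl
      rw [show (1:ℕ) = 0 + 1 from rfl, mem_seqs_succ] at hl
      obtain ⟨l', hl', q, hq, rfl⟩ := hl
      simp [seqs] at hl'
      subst hl'
      have hq1 : 1 ≤ q := le_trans (le_max_left _ _) hq.1
      have hq2 : q ≤ 1 := hq.2
      refine ⟨rfl, fun i hi => ?_, List.isChain_singleton q⟩
      interval_cases i
      simp only [List.getD_cons_zero]
      omega
    · rintro ⟨hlen, hb, _⟩
      rw [show (1:ℕ) = 0 + 1 from rfl, mem_seqs_succ]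
      cases l with
      | nil => simp at hlen
      | cons q l' =>
        simp at hlen
        have := hb 0 (by omega)
        simp at this
        refine ⟨[], by simp [seqs], q, ?_, by simp [hlen]⟩
        simp
        omega
  | succ m hm ih =>
    intro l
    constructor
    · intro hl
      rw [mem_seqs_succ] at hl
      obtain ⟨l', hl', q, hq, rfl⟩ := hl
      obtain ⟨hlen, hb, hch⟩ := (ih l').mp hl'
      have hne : l' ≠ [] := by
        intro h; rw [h] at hlen; simp at hlen; omega
      refine ⟨by simp [hlen], fun i hi => ?_, ?_⟩
      · cases i with
        | zero => simp; omega
        | succ i' =>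
          simp only [List.getD_cons_succ]
          have := hb i' (by omega)
          omega
      · unfold List.Chain'
        rw [List.isChain_cons]
        refine ⟨fun y hy => ?_, hch⟩
        have : l'.head? = some l'.headI := by
          cases l' with
          | nil => simp at hne
          | cons a t => rfl
        rw [this] at hy
        simp at hy
        subst hy
        exact le_trans (le_max_right 1 l'.headI) hq.1
    · rintro ⟨hlen, hb, hch⟩
      cases l with
      | nil => simp at hlen
      | cons q l' =>
        rw [mem_seqs_succ]
        simp at hlen
        have hne : l' ≠ [] := by
          intro h; rw [h] at hlen; simp at hlen; omega
        unfold List.Chain' at hch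
        rw [List.isChain_cons] at hch
        refine ⟨l', ?_, q, ?_, rfl⟩
        · rw [ih l']
          refine ⟨hlen, fun i hi => ?_, hch.2⟩
          have := hb (i+1) (by omega)
          simp only [List.getD_cons_succ] at this
          omega
        · have h0 := hb 0 (by omega)
          simp only [List.getD_cons_zero] at h0
          have hhead : l'.headI ≤ q := by
            have : l'.head? = some l'.headI := by
              cases l' with
              | nil => simp at hne
              | cons a t => rfl
            exact hch.1 _ this
          constructor
          · simp; omega
          · omega

lemma chain'_getD_le {l : List ℕ} (hch : l.Chain' (· ≥ ·)) {i j : ℕ}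
    (hij : i ≤ j) (hj : j < l.length) : l.getD j 0 ≤ l.getD i 0 := by
  rcases Nat.eq_or_lt_of_le hij with h | h
  · rw [h]
  · rw [List.getD_eq_getElem l 0 hj, List.getD_eq_getElem l 0 (lt_trans h hj)]
    unfold List.Chain' at hch
    rw [List.isChain_iff_pairwise] at hch
    exact List.pairwise_iff_getElem.mp hch i j (lt_trans h hj) hj h

lemma mem_board {n m : ℕ} {p : ℕ × ℕ} :
    p ∈ board n m ↔ 1 ≤ p.1 ∧ p.1 ≤ n ∧ 1 ≤ p.2 ∧ p.2 ≤ m := by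
  cases p; simp [board, Finset.mem_Icc]; tauto

/-- A nonempty downward-closed finset of positive naturals is an interval `Icc 1 card`. -/
lemma downclosed_eq_Icc (S : Finset ℕ) (h1 : ∀ x ∈ S, 1 ≤ x)
    (h2 : ∀ x ∈ S, 1 < x → x - 1 ∈ S) : S = Finset.Icc 1 S.card := by
  classical
  rcases S.eq_empty_or_nonempty with h | h
  · subst h; simp
  · have hmax := S.max'_mem h
    set k := S.max' h with hk
    have hsub : Finset.Icc 1 k ⊆ S := by
      intro x hx
      simp [Finset.mem_Icc] at hx
      have key : ∀ d x', x' + d = k → 1 ≤ x' → x' ∈ S := by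
        intro d
        induction d with
        | zero =>
          intro x' hx' _
          have : x' = k := by omega
          rw [this]; exact hmax
        | succ e ihe =>
          intro x' hx' hx1
          have hx1' : x' + 1 ∈ S := ihe (x'+1) (by omega) (by omega)
          have := h2 (x'+1) hx1' (by omega)
          simpa using this
      exact key (k - x) x (by omega) hx.1
    have hsub2 : S ⊆ Finset.Icc 1 k := by
      intro x hx
      simp [Finset.mem_Icc]
      exact ⟨h1 x hx, S.le_max' x hx⟩
    have hSk : S = Finset.Icc 1 k := Finset.Subset.antisymm hsub2 hsub
    have : S.card = k := by rw [hSk, Nat.card_Icc]; omega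
    rw [← this] at hSk
    exact hSk

section FerrersStructure

variable {n m : ℕ} {F : Finset (ℕ × ℕ)} (hF : IsFerrers n m F)

include hF

lemma col_eq_Icc (j : ℕ) :
    (F.filter (fun p => p.2 = j)).image Prod.fst = Finset.Icc 1 (colH F j) := by
  classical
  rw [show colH F j = ((F.filter (fun p => p.2 = j)).image Prod.fst).card by
    rw [Finset.card_image_of_injOn]
    · rfl
    · intro p hp q hq hpq
      simp [Finset.mem_filter] at hp hq
      exact Prod.ext hpq (hp.2.trans hq.2.symm)]
  apply downclosed_eq_Icc
  · intro x hx
    simp only [Finset.mem_image, Finset.mem_filter] at hx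
    obtain ⟨p, hp, rfl⟩ := hx
    exact (mem_board.mp (hF.1 hp.1)).1
  · intro x hx hx1
    simp only [Finset.mem_image, Finset.mem_filter] at hx ⊢
    obtain ⟨p, ⟨hp, hpj⟩, rfl⟩ := hx
    refine ⟨(p.1 - 1, j), ⟨?_, rfl⟩, rfl⟩
    have := hF.2.2.2.2 p.1 p.2 (by simpa using hp) hx1
    rwa [hpj] at this

lemma mem_iff_colH {i j : ℕ} :
    (i, j) ∈ F ↔ 1 ≤ j ∧ j ≤ m ∧ 1 ≤ i ∧ i ≤ colH F j := by
  constructor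
  · intro h
    have hb := mem_board.mp (hF.1 h)
    have : i ∈ (F.filter (fun p => p.2 = j)).image Prod.fst := by
      simp only [Finset.mem_image, Finset.mem_filter]
      exact ⟨(i, j), ⟨h, rfl⟩, rfl⟩
    rw [col_eq_Icc hF j, Finset.mem_Icc] at this
    exact ⟨hb.2.2.1, hb.2.2.2, this.1, this.2⟩
  · rintro ⟨h1, h2, h3, h4⟩
    have : i ∈ (F.filter (fun p => p.2 = j)).image Prod.fst := by
      rw [col_eq_Icc hF j, Finset.mem_Icc]
      exact ⟨h3, h4⟩
    simp only [Finset.mem_image, Finset.mem_filter] at this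
    obtain ⟨p, ⟨hp, hpj⟩, hpi⟩ := this
    have : p = (i, j) := Prod.ext hpi hpj
    rwa [this] at hp

lemma row1_mem {j : ℕ} (h1 : 1 ≤ j) (hj : j ≤ m) : (1, j) ∈ F := by
  induction j, h1 using Nat.le_induction with
  | base => exact hF.2.1
  | succ j hj' ih => exact hF.2.2.2.1 1 j (ih (by omega)) (by omega)

lemma colH_pos {j : ℕ} (h1 : 1 ≤ j) (hj : j ≤ m) : 1 ≤ colH F j :=
  ((mem_iff_colH hF).mp (row1_mem hF h1 hj)).2.2.2

lemma colH_last (hm : 1 ≤ m) : colH F m = n := by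
  have h1 := (mem_iff_colH hF).mp hF.2.2.1
  have h2 : (colH F m, m) ∈ F := (mem_iff_colH hF).mpr
    ⟨hm, le_refl m, by omega, le_refl _⟩
  have := (mem_board.mp (hF.1 h2)).2.1
  omega

lemma colH_mono {j j' : ℕ} (h1 : 1 ≤ j) (hjj : j ≤ j') (hj' : j' ≤ m) :
    colH F j ≤ colH F j' := by
  induction j', hjj using Nat.le_induction with
  | base => exact le_refl _
  | succ j' hjj' ih =>
    have hstep : colH F j' ≤ colH F (j' + 1) := by
      have hc : (colH F j', j') ∈ F := (mem_iff_colH hF).mpr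
        ⟨by omega, by omega, colH_pos hF (by omega) (by omega), le_refl _⟩
      have := hF.2.2.2.1 _ _ hc (by omega)
      exact ((mem_iff_colH hF).mp this).2.2.2
    exact le_trans (ih (by omega)) hstep

lemma colH_card (hm : 1 ≤ m) : ∑ t ∈ Finset.Icc 1 m, colH F t = F.card := by
  rw [Finset.card_eq_sum_card_fiberwise (f := fun p => p.2) (t := Finset.Icc 1 m)]
  · rfl
  · intro p hp
    have := mem_board.mp (hF.1 hp)
    simp [Finset.mem_Icc]
    omega

end FerrersStructure


section MDSChar

variable {n m : ℕ} {F : Finset (ℕ × ℕ)} (hF : IsFerrers n m F)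

include hF

lemma kappa_eq (hn : 2 ≤ n) (hmn : n ≤ m) : kappa F m 2 + m = F.card := by
  have hm : 1 ≤ m := by omega
  have sumc := colH_card hF hm
  have hk1 : kappaJ F m 2 1 + m = F.card := by
    unfold kappaJ
    have e : m - 2 + 1 + 1 = m := by omega
    rw [e]
    have h2 : ∑ t ∈ Finset.Icc 1 m, (colH F t - 1 + 1) = ∑ t ∈ Finset.Icc 1 m, colH F t := by
      apply Finset.sum_congr rfl
      intro t ht
      simp only [Finset.mem_Icc] at ht
      have := colH_pos hF ht.1 ht.2
      omega
    rw [Finset.sum_add_distrib, Finset.sum_const, Nat.card_Icc, smul_eq_mul, mul_one] at h2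
    omega
  have hk0 : kappaJ F m 2 0 + n = F.card := by
    unfold kappaJ
    have e : m - 2 + 1 + 0 = m - 1 := by omega
    rw [e]
    have hsplit : ∑ t ∈ Finset.Icc 1 ((m-1)+1), colH F t
        = (∑ t ∈ Finset.Icc 1 (m-1), colH F t) + colH F ((m-1)+1) :=
      Finset.sum_Icc_succ_top (by omega) _
    have em : (m-1)+1 = m := by omega
    rw [em, colH_last hF hm] at hsplit
    simp only [Nat.sub_zero]
    omega
  have himg : (kappaJ F m 2 '' Set.Iio 2) = {kappaJ F m 2 0, kappaJ F m 2 1} := by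
    have h01 : (Set.Iio 2 : Set ℕ) = {0, 1} := by
      ext x; simp [Set.mem_Iio]; omega
    rw [h01, Set.image_insert_eq, Set.image_singleton]
  unfold kappa
  rw [himg, csInf_pair]
  have hinf : kappaJ F m 2 0 ⊓ kappaJ F m 2 1 = kappaJ F m 2 1 := by
    rw [inf_eq_right]; omega
  rw [hinf]; omega

omit hF in
lemma mem_diag {i : ℕ} {p : ℕ × ℕ} : p ∈ diag n m i ↔ p ∈ board n m ∧ p.2 + i = p.1 + m :=
  Finset.mem_filter

lemma diag_inter (i : ℕ) : diag n m i ∩ F = F.filter (fun p => p.1 + m - p.2 = i) := by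
  ext p
  rw [Finset.mem_inter, mem_diag, Finset.mem_filter]
  constructor
  · rintro ⟨⟨hb, he⟩, hp⟩
    have := mem_board.mp hb
    exact ⟨hp, by omega⟩
  · rintro ⟨hp, he⟩
    have hb := mem_board.mp (hF.1 hp)
    exact ⟨⟨hF.1 hp, by omega⟩, hp⟩

lemma sum_S (hn : 2 ≤ n) (hmn : n ≤ m) :
    ∑ i ∈ Finset.Icc 1 (m+n-1), (diag n m i ∩ F).card = F.card := by
  rw [eq_comm]
  rw [Finset.card_eq_sum_card_fiberwise (f := fun p => p.1 + m - p.2)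
    (t := Finset.Icc 1 (m+n-1)) (fun p hp => by
      have hb := mem_board.mp (hF.1 hp)
      simp only [Finset.mem_coe, Finset.mem_Icc]
      omega)]
  apply Finset.sum_congr rfl
  intro i _
  rw [diag_inter hF i]

lemma S_pos {i : ℕ} (h1 : 1 ≤ i) (hi : i ≤ m) :
    1 ≤ (diag n m i ∩ F).card := by
  rw [Nat.succ_le_iff, Finset.card_pos]
  refine ⟨(1, m - i + 1), ?_⟩
  rw [diag_inter hF]
  simp only [Finset.mem_filter]
  exact ⟨row1_mem hF (by omega) (by omega), by omega⟩

omit hF in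
lemma sum_sub_one {s : Finset ℕ} {f : ℕ → ℕ} :
    (∑ i ∈ s, (f i - 1)) + (s.filter (fun i => 1 ≤ f i)).card = ∑ i ∈ s, f i := by
  classical
  rw [Finset.card_filter, ← Finset.sum_add_distrib]
  apply Finset.sum_congr rfl
  intro i _
  by_cases h : 1 ≤ f i
  · simp only [if_pos h]; omega
  · simp only [if_neg h]; omega

lemma diagSum_eq (hn : 2 ≤ n) (hmn : n ≤ m) :
    diagSum n m F 2 + m
      + ((Finset.Ioc m (m+n-1)).filter (fun i => 1 ≤ (diag n m i ∩ F).card)).card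
      = F.card := by
  classical
  have key := sum_sub_one (s := Finset.Icc 1 (m+n-1))
    (f := fun i => (diag n m i ∩ F).card)
  have hds : diagSum n m F 2 = ∑ i ∈ Finset.Icc 1 (m+n-1), ((diag n m i ∩ F).card - 1) := rfl
  have hcf : ∀ (a N : ℕ), ((Finset.Ioc a N).filter (fun i => 1 ≤ (diag n m i ∩ F).card)).card
      = ∑ i ∈ Finset.Ioc a N, (if 1 ≤ (diag n m i ∩ F).card then 1 else 0) := by
    intro a N
    rw [Finset.card_filter]
  have hIccIoc : (Finset.Icc 1 (m+n-1)) = Finset.Ioc 0 (m+n-1) := Finset.Icc_add_one_left_eq_Ioc 0 (m+n-1)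
  have split := Finset.sum_Ioc_consecutive
    (f := fun i => if 1 ≤ (diag n m i ∩ F).card then 1 else 0)
    (Nat.zero_le m) (show m ≤ m+n-1 by omega)
  have hfirst : ∑ i ∈ Finset.Ioc 0 m, (if 1 ≤ (diag n m i ∩ F).card then 1 else 0) = m := by
    have : ∀ i ∈ Finset.Ioc 0 m, (if 1 ≤ (diag n m i ∩ F).card then 1 else 0) = 1 := by
      intro i hi
      simp only [Finset.mem_Ioc] at hi
      rw [if_pos (S_pos hF (by omega) hi.2)]
    rw [Finset.sum_congr rfl this, Finset.sum_const, Nat.card_Ioc, smul_eq_mul, mul_one]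
    omega
  have hfull : ((Finset.Icc 1 (m+n-1)).filter (fun i => 1 ≤ (diag n m i ∩ F).card)).card
      = m + ((Finset.Ioc m (m+n-1)).filter (fun i => 1 ≤ (diag n m i ∩ F).card)).card := by
    rw [Finset.card_filter, hIccIoc, ← split, hfirst, hcf]
  rw [sum_S hF hn hmn] at key
  omega

lemma mds_iff (hn : 2 ≤ n) (hmn : n ≤ m) :
    MDSConstructible n m F 2 ↔ ∀ p ∈ F, p.1 ≤ p.2 := by
  classical
  have hκ := kappa_eq hF hn hmn
  have hD := diagSum_eq hF hn hmn
  set e := ((Finset.Ioc m (m+n-1)).filter (fun i => 1 ≤ (diag n m i ∩ F).card)).card with he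
  have hiff : MDSConstructible n m F 2 ↔ e = 0 := by
    unfold MDSConstructible
    omega
  rw [hiff]
  constructor
  · intro h0 p hp
    by_contra hc
    push_neg at hc
    have hb := mem_board.mp (hF.1 hp)
    have hcard : 1 ≤ (diag n m (p.1 + m - p.2) ∩ F).card := by
      rw [Nat.succ_le_iff, Finset.card_pos]
      refine ⟨p, ?_⟩
      rw [diag_inter hF]
      exact Finset.mem_filter.mpr ⟨hp, rfl⟩
    have hmem : p.1 + m - p.2 ∈ (Finset.Ioc m (m+n-1)).filter
        (fun i => 1 ≤ (diag n m i ∩ F).card) := by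
      rw [Finset.mem_filter, Finset.mem_Ioc]
      exact ⟨⟨by omega, by omega⟩, hcard⟩
    rw [he, Finset.card_eq_zero] at h0
    rw [h0] at hmem
    exact absurd hmem (Finset.notMem_empty _)
  · intro hcell
    rw [he, Finset.card_eq_zero, Finset.filter_eq_empty_iff]
    intro i hi
    simp only [Finset.mem_Ioc] at hi
    intro hcard
    rw [Nat.succ_le_iff, Finset.card_pos] at hcard
    obtain ⟨p, hp⟩ := hcard
    rw [diag_inter hF, Finset.mem_filter] at hp
    have hb := mem_board.mp (hF.1 hp.1)
    have := hcell p hp.1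
    omega

end MDSChar

section Bijection

def cl (l : List ℕ) (j : ℕ) : ℕ := l.getD (l.length - j) 0

def ofList (l : List ℕ) : Finset (ℕ × ℕ) :=
  (Finset.Icc 1 l.headI ×ˢ Finset.Icc 1 l.length).filter (fun p => p.1 ≤ cl l p.2)

variable {m : ℕ} {l : List ℕ} (hl : l ∈ seqs m) (hm : 1 ≤ m)

include hl hm

lemma len_l : l.length = m := ((mem_seqs_iff m hm l).mp hl).1

lemma l_ne_nil : l ≠ [] := by
  have := len_l hl hm
  intro h; rw [h] at this; simp at this; omega

lemma cl_bounds {j : ℕ} (h1 : 1 ≤ j) (hj : j ≤ m) : 1 ≤ cl l j ∧ cl l j ≤ j := by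
  obtain ⟨hlen, hb, _⟩ := (mem_seqs_iff m hm l).mp hl
  have := hb (m - j) (by omega)
  unfold cl
  rw [hlen]
  omega

lemma cl_mono {j j' : ℕ} (h1 : 1 ≤ j) (hjj : j ≤ j') (hj' : j' ≤ m) :
    cl l j ≤ cl l j' := by
  obtain ⟨hlen, _, hch⟩ := (mem_seqs_iff m hm l).mp hl
  unfold cl
  rw [hlen]
  exact chain'_getD_le hch (by omega) (by omega)

lemma cl_last : cl l m = l.headI := by
  unfold cl
  rw [len_l hl hm, Nat.sub_self, ← headI_eq_getD (l_ne_nil hl hm)]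

lemma mem_ofList {i j : ℕ} :
    (i, j) ∈ ofList l ↔ 1 ≤ i ∧ 1 ≤ j ∧ j ≤ m ∧ i ≤ cl l j := by
  unfold ofList
  rw [Finset.mem_filter, Finset.mem_product]
  simp only [Finset.mem_Icc]
  rw [len_l hl hm]
  constructor
  · rintro ⟨⟨h1, h2⟩, h3⟩
    exact ⟨h1.1, h2.1, h2.2, h3⟩
  · rintro ⟨h1, h2, h3, h4⟩
    have hle : cl l j ≤ cl l m := cl_mono hl hm h2 h3 (le_refl m)
    rw [cl_last hl hm] at hle
    exact ⟨⟨⟨h1, le_trans h4 hle⟩, ⟨h2, h3⟩⟩, h4⟩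

lemma ferrers_ofList {n : ℕ} (hn2 : 2 ≤ n) (hmn : n ≤ m) (hhead : l.headI = n) :
    IsFerrers n m (ofList l) := by
  refine ⟨?_, ?_, ?_, ?_, ?_⟩
  · intro p hp
    obtain ⟨i, j⟩ := p
    rw [mem_ofList hl hm] at hp
    rw [mem_board]
    have hb := cl_bounds hl hm hp.2.1 hp.2.2.1
    have hle : cl l j ≤ cl l m := cl_mono hl hm hp.2.1 hp.2.2.1 (le_refl m)
    rw [cl_last hl hm, hhead] at hle
    exact ⟨hp.1, by omega, hp.2.1, hp.2.2.1⟩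
  · rw [mem_ofList hl hm]
    have := cl_bounds hl hm (le_refl 1) hm
    exact ⟨le_refl 1, le_refl 1, hm, this.1⟩
  · rw [mem_ofList hl hm, cl_last hl hm, hhead]
    exact ⟨by omega, hm, le_refl m, le_refl n⟩
  · intro i j hij hjm
    rw [mem_ofList hl hm] at hij ⊢
    have := cl_mono hl hm hij.2.1 (Nat.le_succ j) (by omega)
    exact ⟨hij.1, by omega, by omega, le_trans hij.2.2.2 this⟩
  · intro i j hij hi
    rw [mem_ofList hl hm] at hij ⊢
    exact ⟨by omega, hij.2.1, hij.2.2.1, by omega⟩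

lemma cells_ofList : ∀ p ∈ ofList l, p.1 ≤ p.2 := by
  intro p hp
  obtain ⟨i, j⟩ := p
  rw [mem_ofList hl hm] at hp
  have := cl_bounds hl hm hp.2.1 hp.2.2.1
  simp only
  omega

lemma colH_ofList {t : ℕ} (h1 : 1 ≤ t) (ht : t ≤ m) :
    colH (ofList l) t = cl l t := by
  unfold colH
  have himg : (ofList l).filter (fun p => p.2 = t)
      = (Finset.Icc 1 (cl l t)).image (fun i => (i, t)) := by
    ext p
    obtain ⟨a, b⟩ := p
    rw [Finset.mem_filter]
    simp only [Finset.mem_image, Finset.mem_Icc]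
    constructor
    · rintro ⟨hab, hbt⟩
      have hbt' : b = t := hbt
      subst hbt' 
      rw [mem_ofList hl hm] at hab
      exact ⟨a, ⟨hab.1, hab.2.2.2⟩, rfl⟩
    · rintro ⟨i, hi, heq⟩
      have ha : i = a := congrArg Prod.fst heq
      have hb : t = b := congrArg Prod.snd heq
      subst ha
      subst hb
      exact ⟨(mem_ofList hl hm).mpr ⟨hi.1, h1, ht, hi.2⟩, rfl⟩
  rw [himg, Finset.card_image_of_injective _ (fun a b hab => (Prod.mk.injEq ..).mp hab |>.1),
    Nat.card_Icc]
  omega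

end Bijection

section Surj

variable {n m : ℕ} {F : Finset (ℕ × ℕ)} (hF : IsFerrers n m F)

def listOf (F : Finset (ℕ × ℕ)) (m : ℕ) : List ℕ :=
  (List.range m).map (fun i => colH F (m - i))

omit hF in
lemma len_listOf : (listOf F m).length = m := by simp [listOf]

omit hF in
lemma getD_listOf {i : ℕ} (hi : i < m) : (listOf F m).getD i 0 = colH F (m - i) := by
  rw [List.getD_eq_getElem _ _ (by rw [len_listOf]; exact hi)]
  simp [listOf]

include hF

lemma colH_le_of_cells (hcell : ∀ p ∈ F, p.1 ≤ p.2) {t : ℕ} (h1 : 1 ≤ t) (ht : t ≤ m) :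
    colH F t ≤ t := by
  have hpos := colH_pos hF h1 ht
  have hmem : (colH F t, t) ∈ F := (mem_iff_colH hF).mpr ⟨h1, ht, hpos, le_refl _⟩
  exact hcell _ hmem

lemma listOf_mem_seqs (hn2 : 2 ≤ n) (hmn : n ≤ m) (hcell : ∀ p ∈ F, p.1 ≤ p.2) :
    listOf F m ∈ seqs m := by
  have hm : 1 ≤ m := by omega
  rw [mem_seqs_iff m hm]
  refine ⟨len_listOf, ?_, ?_⟩
  · intro i hi
    rw [getD_listOf hi]
    have h1 : 1 ≤ m - i := by omega
    have h2 : m - i ≤ m := by omega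
    exact ⟨colH_pos hF h1 h2, colH_le_of_cells hF hcell h1 h2⟩
  · unfold List.Chain'
    rw [List.isChain_iff_pairwise, List.pairwise_iff_getElem]
    intro i j hi hj hij
    rw [len_listOf] at hi hj
    have e1 : (listOf F m)[i] = colH F (m - i) := by
      rw [← List.getD_eq_getElem _ 0 (by rw [len_listOf]; exact hi), getD_listOf hi]
    have e2 : (listOf F m)[j] = colH F (m - j) := by
      rw [← List.getD_eq_getElem _ 0 (by rw [len_listOf]; exact hj), getD_listOf hj]
    rw [e1, e2]
    exact colH_mono hF (by omega) (by omega) (by omega)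

lemma headI_listOf (hm : 1 ≤ m) : (listOf F m).headI = n := by
  have hne : listOf F m ≠ [] := by
    intro h
    have := len_listOf (F := F) (m := m)
    rw [h] at this; simp at this; omega
  rw [headI_eq_getD hne, getD_listOf (by omega : 0 < m), Nat.sub_zero, colH_last hF hm]

lemma ofList_listOf (hn2 : 2 ≤ n) (hmn : n ≤ m) (hcell : ∀ p ∈ F, p.1 ≤ p.2) :
    ofList (listOf F m) = F := by
  have hm : 1 ≤ m := by omega
  have hseq := listOf_mem_seqs hF hn2 hmn hcell
  ext p
  obtain ⟨i, j⟩ := p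
  rw [mem_ofList hseq hm, mem_iff_colH hF]
  by_cases hj : 1 ≤ j ∧ j ≤ m
  · have : cl (listOf F m) j = colH F j := by
      unfold cl
      rw [len_listOf, getD_listOf (by omega)]
      congr 1
      omega
    rw [this]
    tauto
  · constructor
    · rintro ⟨_, h2, h3, _⟩; exact absurd ⟨h2, h3⟩ hj
    · rintro ⟨h1, h2, _, _⟩; exact absurd ⟨h1, h2⟩ hj

end Surj

lemma count_eq (n m : ℕ) (hmn : n ≤ m) (hn : 2 ≤ n) :
    Nat.card {F : Finset (ℕ × ℕ) // IsFerrers n m F ∧ MDSConstructible n m F 2} = A m n := by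
  classical
  have hm : 1 ≤ m := by omega
  set G := (seqs m).filter (fun l => l.headI = n) with hG
  have hmem : ∀ l ∈ G, IsFerrers n m (ofList l) ∧ MDSConstructible n m (ofList l) 2 := by
    intro l hlG
    rw [hG, Finset.mem_filter] at hlG
    obtain ⟨hseq, hhead⟩ := hlG
    have hferr := ferrers_ofList hseq hm hn hmn hhead
    exact ⟨hferr, (mds_iff hferr hn hmn).mpr (cells_ofList hseq hm)⟩
  let Φ : {l // l ∈ G} → {F : Finset (ℕ × ℕ) // IsFerrers n m F ∧ MDSConstructible n m F 2} :=
    fun x => ⟨ofList x.1, hmem x.1 x.2⟩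
  have hbij : Function.Bijective Φ := by
    constructor
    · rintro ⟨l, hlG⟩ ⟨l', hlG'⟩ heq
      simp only [Φ, Subtype.mk.injEq] at heq
      rw [hG, Finset.mem_filter] at hlG hlG'
      apply Subtype.ext
      apply List.ext_getElem (by rw [len_l hlG.1 hm, len_l hlG'.1 hm])
      intro i hi1 hi2
      rw [len_l hlG.1 hm] at hi1
      rw [len_l hlG'.1 hm] at hi2
      have e1 : l[i] = cl l (m - i) := by
        unfold cl
        rw [len_l hlG.1 hm, show m - (m - i) = i by omega,
          List.getD_eq_getElem _ 0 (by rw [len_l hlG.1 hm]; exact hi1)]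
      have e2 : l'[i] = cl l' (m - i) := by
        unfold cl
        rw [len_l hlG'.1 hm, show m - (m - i) = i by omega,
          List.getD_eq_getElem _ 0 (by rw [len_l hlG'.1 hm]; exact hi2)]
      rw [e1, e2, ← colH_ofList hlG.1 hm (by omega) (by omega),
        ← colH_ofList hlG'.1 hm (by omega) (by omega), heq]
    · rintro ⟨F, hF, hmds⟩
      have hcell := (mds_iff hF hn hmn).mp hmds
      have hseq := listOf_mem_seqs hF hn hmn hcell
      have hhead := headI_listOf hF hm
      refine ⟨⟨listOf F m, ?_⟩, ?_⟩
      · rw [hG, Finset.mem_filter]; exact ⟨hseq, hhead⟩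
      · simp only [Φ, Subtype.mk.injEq]
        exact ofList_listOf hF hn hmn hcell
  rw [← Nat.card_eq_of_bijective Φ hbij]
  rw [Nat.card_eq_finsetCard]
  rfl

end MDSAux

theorem count_mds_constructible_d2 (n m : ℕ) (hmn : n ≤ m) (hn : 2 ≤ n) :
    Nat.card {F : Finset (ℕ × ℕ) // IsFerrers n m F ∧ MDSConstructible n m F 2} * m
        = (m - n + 1) * (m + n - 2).choose (n - 1) ∧
    Nat.card {F : Finset (ℕ × ℕ) // IsFerrers n n F ∧ MDSConstructible n n F 2}
        = catalan (n - 1) := by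
  constructor
  · rw [MDSAux.count_eq n m hmn hn]
    exact MDSAux.A_mul m n hn hmn
  · rw [MDSAux.count_eq n n (le_refl n) hn]
    have h2 := MDSAux.A_mul n n hn (le_refl n)
    have e1 : n - n + 1 = 1 := by omega
    rw [e1, one_mul] at h2
    have hcb : (n + n - 2).choose (n - 1) = Nat.centralBinom (n-1) := by
      unfold Nat.centralBinom
      congr 1
      omega
    rw [hcb] at h2
    have hcat := succ_mul_catalan_eq_centralBinom (n-1)
    have e2 : n - 1 + 1 = n := by omega
    rw [e2] at hcat
    have hfin : MDSAux.A n n * n = catalan (n-1) * n := by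
      rw [h2, ← hcat]
      ring
    exact Nat.eq_of_mul_eq_mul_right (by omega) hfin
end

section
/- Let n ≥ 3. The number of n × n Ferrers diagrams F for which (F,3) is MDS-constructible is (1/n)·C(2n-2, n-1) + (2/(n-1))·C(2n-4, n-2). -/
namespace MDS3

/-- Staircase sequences: `c` supported on `[1,k]`, with `1 ≤ c t ≤ t` and weakly increasing. -/
def StairP (k : ℕ) (c : ℕ → ℕ) : Prop :=
  (∀ t, 1 ≤ t → t ≤ k → 1 ≤ c t ∧ c t ≤ t) ∧
  (∀ t, 1 ≤ t → t + 1 ≤ k → c t ≤ c (t + 1)) ∧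
  (∀ t, t = 0 ∨ k < t → c t = 0)

lemma StairP.mono {k : ℕ} {c : ℕ → ℕ} (h : StairP k c) :
    ∀ s t, 1 ≤ s → s ≤ t → t ≤ k → c s ≤ c t := by
  intro s t hs hst htk
  induction t with
  | zero => omega
  | succ t ih =>
    rcases Nat.lt_or_ge s (t+1) with hlt | hge
    · have h1 : c t ≤ c (t+1) := h.2.1 t (by omega) (by omega)
      have := ih (by omega) (by omega)
      omega
    · have : s = t + 1 := by omega
      subst this; exact le_refl _

instance stairFinite (k : ℕ) : Finite {c : ℕ → ℕ // StairP k c} := by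
  have : Function.Injective (fun c : {c : ℕ → ℕ // StairP k c} =>
      (fun t : Fin (k+1) => (⟨c.1 t, by
        rcases t with ⟨t, ht⟩
        show c.1 t < k + 1
        rcases Nat.eq_zero_or_pos t with rfl | hpos
        · simp [c.2.2.2 0 (Or.inl rfl)]
        · have := c.2.1 t hpos
          rcases le_or_gt t k with hle | hlt
          · have := this (by omega); omega
          · omega⟩ : Fin (k+1))) ) := by
    intro c d hcd
    ext t
    rcases le_or_gt t k with hle | hlt
    · have := congrFun hcd ⟨t, by omega⟩
      simpa using congrArg Fin.val this
    · rw [c.2.2.2 t (Or.inr hlt), d.2.2.2 t (Or.inr hlt)]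
  exact Finite.of_injective _ this

lemma stairP_zero (c : ℕ → ℕ) : StairP 0 c ↔ c = fun _ => 0 := by
  constructor
  · intro h; funext t; exact h.2.2 t (by omega)
  · rintro rfl; refine ⟨by omega, by omega, fun t ht => rfl⟩

end MDS3

namespace MDS3

/-- Gluing: prefix `p` on `[1,i]`, a fixed point `i+1`, then `s` shifted up by `i`. -/
def glue (m i : ℕ) (p s : ℕ → ℕ) : ℕ → ℕ := fun t =>
  if t ≤ i then p t
  else if t = i + 1 then i + 1
  else if t ≤ m + 1 then s (t - (i + 1)) + i
  else 0

def split1 (i : ℕ) (c : ℕ → ℕ) : ℕ → ℕ := fun t => if 1 ≤ t ∧ t ≤ i then c t else 0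

def split2 (m g : ℕ) (c : ℕ → ℕ) : ℕ → ℕ := fun t =>
  if 1 ≤ t ∧ t ≤ m + 1 - g then c (g + t) - (g - 1) else 0

def piv (m : ℕ) (c : ℕ → ℕ) : ℕ := Nat.findGreatest (fun t => c t = t) (m + 1)

section pivfacts

variable {m : ℕ} {c : ℕ → ℕ} (hc : StairP (m+1) c)

include hc

lemma c_one : c 1 = 1 := by
  have := hc.1 1 le_rfl (by omega); omega

lemma piv_ge : 1 ≤ piv m c :=
  Nat.le_findGreatest (by omega) (c_one hc)

omit hc in
lemma piv_le : piv m c ≤ m + 1 := Nat.findGreatest_le _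

lemma piv_fix : c (piv m c) = piv m c :=
  Nat.findGreatest_spec (P := fun t => c t = t) (m := 1) (by omega) (c_one hc)

omit hc in
lemma piv_max : ∀ t, piv m c < t → t ≤ m + 1 → c t ≠ t := fun _ h1 h2 =>
  Nat.findGreatest_is_greatest (P := fun t => c t = t) h1 h2

lemma stairP_split1 : StairP (piv m c - 1) (split1 (piv m c - 1) c) := by
  have hgm : piv m c ≤ m + 1 := piv_le
  refine ⟨?_, ?_, ?_⟩
  · intro t h1 h2
    have := hc.1 t h1 (by omega)
    simp only [split1, if_pos (And.intro h1 h2)]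
    omega
  · intro t h1 h2
    have := hc.2.1 t h1 (by omega)
    simp only [split1]
    rw [if_pos (by omega : 1 ≤ t ∧ t ≤ piv m c - 1),
        if_pos (by omega : 1 ≤ t + 1 ∧ t + 1 ≤ piv m c - 1)]
    exact this
  · intro t ht
    simp only [split1]
    rw [if_neg (by omega)]

lemma stairP_split2 : StairP (m - (piv m c - 1)) (split2 m (piv m c) c) := by
  have hg1 := piv_ge hc
  have hgm : piv m c ≤ m + 1 := piv_le
  have hfix := piv_fix hc
  set g := piv m c with hg
  have key : ∀ t, 1 ≤ t → g + t ≤ m + 1 → g ≤ c (g + t) ∧ c (g + t) ≤ g + t - 1 := by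
    intro t h1 h2
    have hb := hc.1 (g + t) (by omega) h2
    have hmax := piv_max (c := c) (g + t) (by omega) h2
    have hmono := hc.mono g (g + t) (by omega) (by omega) h2
    omega
  refine ⟨?_, ?_, ?_⟩
  · intro t h1 h2
    have := key t h1 (by omega)
    simp only [split2]
    rw [if_pos (by omega : 1 ≤ t ∧ t ≤ m + 1 - g)]
    omega
  · intro t h1 h2
    have k1 := key t h1 (by omega)
    have k2 := key (t+1) (by omega) (by omega)
    have hstep := hc.2.1 (g + t) (by omega) (by omega)
    simp only [split2]
    rw [if_pos (by omega : 1 ≤ t ∧ t ≤ m + 1 - g),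
        if_pos (by omega : 1 ≤ t + 1 ∧ t + 1 ≤ m + 1 - g)]
    have : g + t + 1 = g + (t + 1) := by omega
    rw [this] at hstep
    omega
  · intro t ht
    simp only [split2]
    rw [if_neg (by omega)]

end pivfacts

lemma stairP_glue {m i : ℕ} (him : i ≤ m) {p s : ℕ → ℕ}
    (hp : StairP i p) (hs : StairP (m - i) s) : StairP (m + 1) (glue m i p s) := by
  refine ⟨?_, ?_, ?_⟩
  · intro t h1 h2
    simp only [glue]
    rcases le_or_gt t i with hti | hti
    · rw [if_pos hti]; exact hp.1 t h1 hti
    · rw [if_neg (by omega)]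
      rcases eq_or_ne t (i+1) with rfl | hne
      · rw [if_pos rfl]; omega
      · rw [if_neg hne, if_pos h2]
        have := hs.1 (t - (i+1)) (by omega) (by omega)
        omega
  · intro t h1 h2
    simp only [glue]
    rcases le_or_gt (t+1) i with h | h
    · rw [if_pos (by omega), if_pos h]; exact hp.2.1 t h1 (by omega)
    · rcases eq_or_ne (t+1) (i+1) with heq | hne
      · rw [if_pos (by omega), if_neg (by omega), if_pos heq]
        have := hp.1 t h1 (by omega)
        omega
      · rcases eq_or_ne t (i+1) with rfl | hne2
        · rw [if_neg (by omega), if_pos rfl, if_neg (by omega), if_neg (by omega),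
            if_pos (by omega)]
          have := hs.1 (i + 1 + 1 - (i+1)) (by omega) (by omega)
          omega
        · -- t ≥ i+2
          have hti : i + 2 ≤ t := by omega
          rw [if_neg (by omega), if_neg (by omega), if_pos (by omega),
              if_neg (by omega), if_neg (by omega), if_pos (by omega)]
          have hstep := hs.2.1 (t - (i+1)) (by omega) (by omega)
          have : t - (i+1) + 1 = t + 1 - (i+1) := by omega
          rw [this] at hstep
          omega
  · intro t ht
    simp only [glue]
    rcases ht with rfl | ht
    · rw [if_pos (by omega)]; exact hp.2.2 0 (Or.inl rfl)
    · rw [if_neg (by omega), if_neg (by omega), if_neg (by omega)]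

end MDS3

namespace MDS3

lemma glue_split {m : ℕ} {c : ℕ → ℕ} (hc : StairP (m+1) c) :
    glue m (piv m c - 1) (split1 (piv m c - 1) c) (split2 m (piv m c) c) = c := by
  have hg1 : 1 ≤ piv m c := piv_ge hc
  have hgm : piv m c ≤ m + 1 := piv_le
  have hfix := piv_fix hc
  set g := piv m c with hgdef
  funext t
  simp only [glue, split1, split2]
  rcases le_or_gt t (g-1) with h | h
  · rw [if_pos h]
    rcases Nat.eq_zero_or_pos t with rfl | h1
    · rw [if_neg (by omega)]; exact (hc.2.2 0 (Or.inl rfl)).symm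
    · rw [if_pos ⟨h1, h⟩]
  · rcases eq_or_ne t g with rfl | hne
    · rw [if_neg (by omega), if_pos (by omega)]
      omega
    · rcases le_or_gt t (m+1) with hle | hlt
      · have hmono := hc.mono g t (by omega) (by omega) hle
        rw [if_neg (by omega), if_neg (by omega), if_pos hle,
            if_pos (by omega : 1 ≤ t - (g-1+1) ∧ t - (g-1+1) ≤ m + 1 - g)]
        have harg : g + (t - (g-1+1)) = t := by omega
        rw [harg]
        omega
      · rw [if_neg (by omega), if_neg (by omega), if_neg (by omega)]
        exact (hc.2.2 t (Or.inr (by omega))).symm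

lemma piv_glue {m i : ℕ} (him : i ≤ m) {p s : ℕ → ℕ}
    (hp : StairP i p) (hs : StairP (m - i) s) : piv m (glue m i p s) = i + 1 := by
  have h1 : glue m i p s (i+1) = i + 1 := by
    simp only [glue]; rw [if_neg (by omega)]; simp
  have hge : i + 1 ≤ piv m (glue m i p s) := Nat.le_findGreatest (by omega) h1
  have hle : piv m (glue m i p s) ≤ m + 1 := piv_le
  by_contra hne
  have hgt : i + 1 < piv m (glue m i p s) := by omega
  have hfix := piv_fix (stairP_glue him hp hs)
  set g := piv m (glue m i p s) with hgd
  have hval : glue m i p s g = s (g - (i+1)) + i := by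
    simp only [glue]; rw [if_neg (by omega), if_neg (by omega), if_pos (by omega)]
  have hsb := (hs.1 (g - (i+1)) (by omega) (by omega)).2
  omega

lemma split1_glue {m i : ℕ} (him : i ≤ m) {p s : ℕ → ℕ}
    (hp : StairP i p) (hs : StairP (m - i) s) :
    split1 i (glue m i p s) = p := by
  funext t
  simp only [split1, glue]
  rcases le_or_gt 1 t with h1 | h1
  · rcases le_or_gt t i with h2 | h2
    · rw [if_pos ⟨h1, h2⟩, if_pos h2]
    · rw [if_neg (by omega)]; exact (hp.2.2 t (Or.inr h2)).symm
  · rw [if_neg (by omega)]; exact (hp.2.2 t (Or.inl (by omega))).symm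

lemma split2_glue {m i : ℕ} (him : i ≤ m) {p s : ℕ → ℕ}
    (hp : StairP i p) (hs : StairP (m - i) s) :
    split2 m (i+1) (glue m i p s) = s := by
  funext t
  simp only [split2, glue]
  by_cases h : 1 ≤ t ∧ t ≤ m + 1 - (i+1)
  · rw [if_pos h, if_neg (by omega), if_neg (by omega), if_pos (by omega)]
    have harg : i + 1 + t - (i+1) = t := by omega
    rw [harg]
    omega
  · rw [if_neg h]; exact (hs.2.2 t (by omega)).symm

theorem card_stair (k : ℕ) : Nat.card {c : ℕ → ℕ // StairP k c} = catalan k := by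
  induction k using Nat.strong_induction_on with
  | _ k ih =>
    cases k with
    | zero =>
      haveI : Unique {c : ℕ → ℕ // StairP 0 c} :=
        { default := ⟨fun _ => 0, (stairP_zero _).2 rfl⟩
          uniq := fun a => Subtype.ext ((stairP_zero _).1 a.2) }
      simp [Nat.card_unique, catalan_zero]
    | succ m =>
      have hbij : Function.Bijective
          (fun x : Σ i : Fin (m+1), {p : ℕ → ℕ // StairP i p} × {s : ℕ → ℕ // StairP (m - i) s} =>
            (⟨glue m x.1 x.2.1.1 x.2.2.1,
              stairP_glue (Nat.lt_succ_iff.mp x.1.2) x.2.1.2 x.2.2.2⟩ :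
              {c : ℕ → ℕ // StairP (m+1) c})) := by
        constructor
        · rintro ⟨⟨i, hi⟩, ⟨p, hp⟩, ⟨s, hs⟩⟩ ⟨⟨i', hi'⟩, ⟨p', hp'⟩, ⟨s', hs'⟩⟩ h
          simp only [Subtype.mk.injEq] at h
          have him : i ≤ m := by omega
          have him' : i' ≤ m := by omega
          have hii : i = i' := by
            have := (piv_glue him hp hs).symm.trans ((congrArg (piv m) h).trans (piv_glue him' hp' hs'))
            omega
          subst hii
          have hpp : p = p' := by
            rw [← split1_glue him hp hs, h, split1_glue him hp' hs']
          have hss : s = s' := by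
            rw [← split2_glue him hp hs, h, split2_glue him hp' hs']
          subst hpp; subst hss
          rfl
        · intro c
          have hg1 : 1 ≤ piv m c.1 := piv_ge c.2
          have hgm : piv m c.1 ≤ m + 1 := piv_le
          refine ⟨⟨⟨piv m c.1 - 1, by omega⟩,
            ⟨split1 (piv m c.1 - 1) c.1, stairP_split1 c.2⟩,
            ⟨split2 m (piv m c.1) c.1, by
              have h := stairP_split2 c.2
              exact h⟩⟩, ?_⟩
          exact Subtype.ext (by
            have := glue_split c.2
            simpa using this)
      haveI : ∀ (j : ℕ), Fintype {p : ℕ → ℕ // StairP j p} := fun j => Fintype.ofFinite _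
      rw [← Nat.card_congr (Equiv.ofBijective _ hbij)]
      rw [Nat.card_eq_fintype_card, Fintype.card_sigma, catalan_succ]
      refine Finset.sum_congr rfl ?_
      intro i _
      rw [Fintype.card_prod, ← Nat.card_eq_fintype_card, ← Nat.card_eq_fintype_card,
          ih i (by omega), ih (m - i) (by omega)]

end MDS3


namespace MDS3

open Finset

lemma downclosed_eq_Icc (I : Finset ℕ) (hlb : ∀ a ∈ I, 1 ≤ a)
    (h : ∀ a ∈ I, ∀ b, 1 ≤ b → b ≤ a → b ∈ I) : I = Finset.Icc 1 I.card := by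
  rcases I.eq_empty_or_nonempty with rfl | hne
  · simp
  · have hI : I = Finset.Icc 1 (I.max' hne) := by
      ext b
      simp only [Finset.mem_Icc]
      constructor
      · intro hb; exact ⟨hlb b hb, I.le_max' b hb⟩
      · intro hb; exact h _ (I.max'_mem hne) b hb.1 hb.2
    obtain ⟨M, hM⟩ : ∃ M, I = Finset.Icc 1 M := ⟨I.max' hne, hI⟩
    subst hM
    simp [Nat.card_Icc]

variable {n : ℕ} {F : Finset (ℕ × ℕ)}

lemma ferrers_down (hF : IsFerrers n n F) :
    ∀ d i j, (i + d, j) ∈ F → 1 ≤ i → (i, j) ∈ F := by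
  intro d
  induction d with
  | zero => exact fun i j h _ => h
  | succ d ih =>
    intro i j h hi
    have h2 := hF.2.2.2.2 (i + d + 1) j (by rw [show i + d + 1 = i + (d+1) by omega]; exact h) (by omega)
    rw [show i + d + 1 - 1 = i + d by omega] at h2
    exact ih i j h2 hi

lemma mem_board_bounds (hF : IsFerrers n n F) {i j : ℕ} (h : (i, j) ∈ F) :
    1 ≤ i ∧ i ≤ n ∧ 1 ≤ j ∧ j ≤ n := by
  have := hF.1 h
  simp only [board, Finset.mem_product, Finset.mem_Icc] at this
  omega

lemma mem_iff_colH (hF : IsFerrers n n F) (i j : ℕ) :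
    (i, j) ∈ F ↔ 1 ≤ i ∧ i ≤ colH F j ∧ 1 ≤ j ∧ j ≤ n := by
  classical
  set I : Finset ℕ := (F.filter (fun p => p.2 = j)).image Prod.fst with hIdef
  have hmemI : ∀ a, a ∈ I ↔ (a, j) ∈ F := by
    intro a
    simp only [hIdef, Finset.mem_image, Finset.mem_filter]
    constructor
    · rintro ⟨⟨x, y⟩, ⟨hxy, rfl⟩, rfl⟩; exact hxy
    · intro h; exact ⟨(a, j), ⟨h, rfl⟩, rfl⟩
  have hcardI : colH F j = I.card := by
    rw [colH, hIdef]
    rw [Finset.card_image_of_injOn]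
    intro p hp q hq hpq
    simp only [Finset.coe_filter, Set.mem_setOf_eq] at hp hq
    exact Prod.ext hpq (hp.2.trans hq.2.symm)
  have hIcc : I = Finset.Icc 1 I.card := by
    apply downclosed_eq_Icc
    · intro a ha; exact (mem_board_bounds hF ((hmemI a).1 ha)).1
    · intro a ha b hb1 hba
      rw [hmemI] at ha ⊢
      exact ferrers_down hF (a - b) b j (by rw [show b + (a - b) = a by omega]; exact ha) hb1
  constructor
  · intro h
    have hb := mem_board_bounds hF h
    have : i ∈ I := (hmemI i).2 h
    rw [hIcc, Finset.mem_Icc] at this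
    omega
  · intro ⟨h1, h2, _, _⟩
    rw [← hmemI]
    rw [hIcc, Finset.mem_Icc, ← hcardI]
    omega

lemma colH_le (hF : IsFerrers n n F) (j : ℕ) : colH F j ≤ n := by
  rcases Nat.eq_zero_or_pos (colH F j) with h | h
  · omega
  · have hne : (F.filter (fun p => p.2 = j)).Nonempty := Finset.card_pos.mp h
    rcases Finset.filter_nonempty_iff.mp hne with ⟨⟨a, b⟩, hp, hpj⟩
    simp only at hpj
    subst hpj
    have hb := mem_board_bounds hF hp
    by_contra hcon
    have hmem : (n + 1, b) ∈ F :=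
      (mem_iff_colH hF (n+1) b).2 ⟨by omega, by omega, by omega, by omega⟩
    have := mem_board_bounds hF hmem
    omega

lemma colH_zero (hF : IsFerrers n n F) (j : ℕ) (h : j = 0 ∨ n < j) : colH F j = 0 := by
  rw [colH, Finset.card_eq_zero, Finset.filter_eq_empty_iff]
  intro p hp
  have := mem_board_bounds hF hp
  rcases p with ⟨a, b⟩
  simp only
  omega

lemma colH_one (hF : IsFerrers n n F) : 1 ≤ colH F 1 := by
  have := (mem_iff_colH hF 1 1).1 hF.2.1
  omega

lemma colH_last (hF : IsFerrers n n F) : colH F n = n := by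
  have h1 := (mem_iff_colH hF n n).1 hF.2.2.1
  have h2 := colH_le hF n
  omega

lemma colH_step (hF : IsFerrers n n F) (j : ℕ) (h1 : 1 ≤ j) (h2 : j + 1 ≤ n) :
    colH F j ≤ colH F (j + 1) := by
  rcases Nat.eq_zero_or_pos (colH F j) with h | h
  · omega
  · have hm : (colH F j, j) ∈ F := (mem_iff_colH hF _ j).2 ⟨h, le_rfl, h1, by omega⟩
    have := hF.2.2.2.1 (colH F j) j hm (by omega)
    have := (mem_iff_colH hF _ (j+1)).1 this
    omega

lemma colH_mono (hF : IsFerrers n n F) (s t : ℕ) (h1 : 1 ≤ s) (h2 : s ≤ t) (h3 : t ≤ n) :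
    colH F s ≤ colH F t := by
  induction t with
  | zero => omega
  | succ t ih =>
    rcases Nat.lt_or_ge s (t+1) with hlt | hge
    · have := colH_step hF t (by omega) (by omega)
      have := ih (by omega) (by omega)
      omega
    · have : s = t + 1 := by omega
      subst this; exact le_rfl

lemma colH_pos (hF : IsFerrers n n F) (j : ℕ) (h1 : 1 ≤ j) (h2 : j ≤ n) : 1 ≤ colH F j := by
  have := colH_one hF
  have := colH_mono hF 1 j le_rfl h1 h2
  omega

lemma sum_colH (hF : IsFerrers n n F) : ∑ t ∈ Finset.Icc 1 n, colH F t = F.card := by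
  rw [Finset.card_eq_sum_card_fiberwise (f := Prod.snd) (t := Finset.Icc 1 n)]
  · rfl
  · intro p hp
    have := mem_board_bounds hF hp
    simp only [Finset.coe_Icc, Set.mem_Icc]
    omega

end MDS3


namespace MDS3

open Finset

variable {n : ℕ} {F : Finset (ℕ × ℕ)}

section kappaFacts

variable (hn : 3 ≤ n) (hF : IsFerrers n n F)
include hn hF

lemma kappa0_id :
    kappaJ F n 3 0 + colH F (n-1) + n = ∑ t ∈ Finset.Icc 1 n, colH F t := by
  obtain ⟨m, rfl⟩ : ∃ m, n = m + 3 := ⟨n - 3, by omega⟩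
  have hsplit : Finset.Icc 1 (m+3) = insert (m+3) (insert (m+2) (Finset.Icc 1 (m+1))) := by
    ext x; simp only [Finset.mem_Icc, Finset.mem_insert]; omega
  rw [kappaJ, show m + 3 - 3 + 1 + 0 = m + 1 by omega, hsplit,
    Finset.sum_insert (by simp only [Finset.mem_insert, Finset.mem_Icc]; omega),
    Finset.sum_insert (by simp only [Finset.mem_Icc]; omega)]
  have hc := colH_last hF
  rw [show m + 3 - 1 = m + 2 by omega]
  simp only [Nat.sub_zero]
  omega

lemma kappa1_id :
    kappaJ F n 3 1 + (n - 1) + n = ∑ t ∈ Finset.Icc 1 n, colH F t := by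
  obtain ⟨m, rfl⟩ : ∃ m, n = m + 3 := ⟨n - 3, by omega⟩
  have hsplit : Finset.Icc 1 (m+3) = insert (m+3) (Finset.Icc 1 (m+2)) := by
    ext x; simp only [Finset.mem_Icc, Finset.mem_insert]; omega
  rw [kappaJ, show m + 3 - 3 + 1 + 1 = m + 2 by omega, hsplit,
    Finset.sum_insert (by simp only [Finset.mem_Icc]; omega)]
  have hc := colH_last hF
  have hcongr : ∑ t ∈ Finset.Icc 1 (m+2), colH F t
      = ∑ t ∈ Finset.Icc 1 (m+2), ((colH F t - 1) + 1) := by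
    refine Finset.sum_congr rfl ?_
    intro t ht
    rw [Finset.mem_Icc] at ht
    have := colH_pos hF t ht.1 (by omega)
    omega
  rw [hcongr, Finset.sum_add_distrib, Finset.sum_const, Nat.card_Icc, smul_eq_mul, mul_one]
  omega

lemma kappa2_id :
    kappaJ F n 3 2 + ((Finset.Icc 1 n).filter (fun t => 2 ≤ colH F t)).card + n
      = ∑ t ∈ Finset.Icc 1 n, colH F t := by
  have hrange : n - 3 + 1 + 2 = n := by omega
  rw [kappaJ, hrange]
  have hcongr : ∑ t ∈ Finset.Icc 1 n, colH F t
      = ∑ t ∈ Finset.Icc 1 n, ((colH F t - 2) + ((if 2 ≤ colH F t then 1 else 0) + 1)) := by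
    refine Finset.sum_congr rfl ?_
    intro t ht
    rw [Finset.mem_Icc] at ht
    have := colH_pos hF t ht.1 ht.2
    split_ifs <;> omega
  rw [hcongr, Finset.sum_add_distrib, Finset.sum_add_distrib, Finset.sum_const,
    Nat.card_Icc, smul_eq_mul, mul_one, Finset.sum_boole]
  push_cast
  omega

omit hF in
lemma kappa_eq :
    kappa F n 3 = min (kappaJ F n 3 0) (min (kappaJ F n 3 1) (kappaJ F n 3 2)) := by
  have hne : (kappaJ F n 3 '' Set.Iio 3).Nonempty := ⟨kappaJ F n 3 0, 0, by norm_num, rfl⟩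
  apply le_antisymm
  · apply le_min
    · exact Nat.sInf_le ⟨0, by norm_num, rfl⟩
    apply le_min
    · exact Nat.sInf_le ⟨1, by norm_num, rfl⟩
    · exact Nat.sInf_le ⟨2, by norm_num, rfl⟩
  · apply le_csInf hne
    rintro b ⟨j, hj, rfl⟩
    simp only [Set.mem_Iio] at hj
    interval_cases j
    · exact min_le_left _ _
    · exact le_trans (min_le_right _ _) (min_le_left _ _)
    · exact le_trans (min_le_right _ _) (min_le_right _ _)

end kappaFacts

end MDS3


namespace MDS3

open Finset

variable {n : ℕ} {F : Finset (ℕ × ℕ)}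

section diagFacts

variable (hn : 3 ≤ n) (hF : IsFerrers n n F)
include hF

lemma diag_inter (r : ℕ) :
    _root_.diag n n r ∩ F = F.filter (fun p => p.2 + r = p.1 + n) := by
  have hd : _root_.diag n n r = (board n n).filter (fun p => p.2 + r = p.1 + n) := rfl
  ext p
  rw [hd, Finset.mem_inter, Finset.mem_filter, Finset.mem_filter]
  constructor
  · rintro ⟨⟨_, hcond⟩, hmem⟩; exact ⟨hmem, hcond⟩
  · rintro ⟨hmem, hcond⟩; exact ⟨⟨hF.1 hmem, hcond⟩, hmem⟩

lemma sum_dcnt :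
    ∑ r ∈ Finset.Icc 1 (n + n - 1), (_root_.diag n n r ∩ F).card = F.card := by
  have h1 : F.card = ∑ r ∈ Finset.Icc 1 (n + n - 1),
      (F.filter (fun p => p.1 + n - p.2 = r)).card := by
    apply Finset.card_eq_sum_card_fiberwise
    intro p hp
    have := mem_board_bounds hF hp
    simp only [Finset.coe_Icc, Set.mem_Icc]
    omega
  rw [h1]
  refine Finset.sum_congr rfl ?_
  intro r _
  rw [diag_inter hF]
  congr 1
  apply Finset.filter_congr
  intro p hp
  have := mem_board_bounds hF hp
  constructor <;> intro h <;> omega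

lemma diagSum_id :
    diagSum n n F 3 + ∑ r ∈ Finset.Icc 1 (n + n - 1), min ((_root_.diag n n r ∩ F).card) 2
      = F.card := by
  rw [← sum_dcnt hF, diagSum, ← Finset.sum_add_distrib]
  refine Finset.sum_congr rfl ?_
  intro r _
  omega

include hn

lemma mem_diag_high (r : ℕ) (hr : n < r) (a b : ℕ) :
    (a, b) ∈ _root_.diag n n r ∩ F ↔
      1 ≤ b ∧ b ≤ n ∧ a = b + (r - n) ∧ b + (r - n) ≤ colH F b := by
  rw [diag_inter hF, Finset.mem_filter]
  constructor
  · rintro ⟨hmem, hcond⟩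
    have hb := mem_board_bounds hF hmem
    have hcol := (mem_iff_colH hF a b).1 hmem
    omega
  · rintro ⟨h1, h2, h3, h4⟩
    refine ⟨(mem_iff_colH hF a b).2 ⟨by omega, by omega, h1, h2⟩, by omega⟩

lemma dcnt_one : (_root_.diag n n 1 ∩ F).card = 1 := by
  have h1 : _root_.diag n n 1 ∩ F = {(1, n)} := by
    rw [diag_inter hF]
    ext ⟨a, b⟩
    simp only [Finset.mem_filter, Finset.mem_singleton, Prod.mk.injEq]
    constructor
    · rintro ⟨hmem, hcond⟩
      have := mem_board_bounds hF hmem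
      omega
    · rintro ⟨ha, hb⟩
      have hc := colH_last hF
      have hcb : colH F b = n := by rw [hb]; exact hc
      exact ⟨(mem_iff_colH hF a b).2 ⟨by omega, by omega, by omega, by omega⟩, by omega⟩
  rw [h1, Finset.card_singleton]

lemma dcnt_low (r : ℕ) (hr1 : 2 ≤ r) (hr2 : r ≤ n) : 2 ≤ (_root_.diag n n r ∩ F).card := by
  have hsub : ({(r, n), (1, n + 1 - r)} : Finset (ℕ × ℕ)) ⊆ _root_.diag n n r ∩ F := by
    intro p hp
    rw [diag_inter hF]
    simp only [Finset.mem_insert, Finset.mem_singleton] at hp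
    rcases hp with rfl | rfl
    · rw [Finset.mem_filter]
      have hc := colH_last hF
      exact ⟨(mem_iff_colH hF r n).2 ⟨by omega, by omega, by omega, le_rfl⟩, by omega⟩
    · rw [Finset.mem_filter]
      have hc := colH_pos hF (n + 1 - r) (by omega) (by omega)
      exact ⟨(mem_iff_colH hF 1 (n + 1 - r)).2 ⟨le_rfl, by omega, by omega, by omega⟩, by omega⟩
  have hcard : ({(r, n), (1, n + 1 - r)} : Finset (ℕ × ℕ)).card = 2 := by
    rw [Finset.card_insert_of_notMem (by simp; omega), Finset.card_singleton]
  rw [← hcard]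
  exact Finset.card_le_card hsub

lemma sum_min_low :
    ∑ r ∈ Finset.Icc 1 n, min ((_root_.diag n n r ∩ F).card) 2 = n + n - 1 := by
  have hsplit : Finset.Icc 1 n = insert 1 (Finset.Icc 2 n) := by
    ext x; simp only [Finset.mem_Icc, Finset.mem_insert]; omega
  rw [hsplit, Finset.sum_insert (by simp only [Finset.mem_Icc]; omega)]
  rw [dcnt_one hn hF]
  have hcongr : ∑ r ∈ Finset.Icc 2 n, min ((_root_.diag n n r ∩ F).card) 2
      = ∑ r ∈ Finset.Icc 2 n, 2 := by
    refine Finset.sum_congr rfl ?_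
    intro r hr
    rw [Finset.mem_Icc] at hr
    have := dcnt_low hn hF r hr.1 hr.2
    omega
  rw [hcongr, Finset.sum_const, Nat.card_Icc, smul_eq_mul]
  omega

lemma T_split :
    ∑ r ∈ Finset.Icc 1 (n + n - 1), min ((_root_.diag n n r ∩ F).card) 2
      = (n + n - 1) + ∑ r ∈ Finset.Icc (n+1) (n + n - 1), min ((_root_.diag n n r ∩ F).card) 2 := by
  have hunion : Finset.Icc 1 (n + n - 1) = Finset.Icc 1 n ∪ Finset.Icc (n+1) (n + n - 1) := by
    ext x; simp only [Finset.mem_Icc, Finset.mem_union]; omega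
  have hdisj : Disjoint (Finset.Icc 1 n) (Finset.Icc (n+1) (n + n - 1)) := by
    rw [Finset.disjoint_left]
    intro x hx hx'
    rw [Finset.mem_Icc] at hx hx'
    omega
  rw [hunion, Finset.sum_union hdisj, sum_min_low hn hF]

end diagFacts

end MDS3


namespace MDS3

open Finset

/-- The characterization of MDS-constructible Ferrers diagrams for `d = 3`. -/
def GoodF (n : ℕ) (F : Finset (ℕ × ℕ)) : Prop :=
  colH F 1 ≤ 2 ∧ (∀ t, 2 ≤ t → t ≤ n - 2 → colH F t ≤ t) ∧
    ¬(colH F 1 = 2 ∧ colH F (n-1) = n)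

variable {n : ℕ} {F : Finset (ℕ × ℕ)}

section Echunk

variable (hn : 3 ≤ n) (hF : IsFerrers n n F)
include hn hF

lemma dcnt_high_zero (hc1 : colH F 1 ≤ 2) (hmid : ∀ t, 2 ≤ t → t ≤ n - 2 → colH F t ≤ t)
    (r : ℕ) (hr : n + 2 ≤ r) : (_root_.diag n n r ∩ F).card = 0 := by
  rw [Finset.card_eq_zero, Finset.eq_empty_iff_forall_notMem]
  rintro ⟨a, b⟩ hmem
  rw [mem_diag_high hn hF r (by omega)] at hmem
  obtain ⟨hb1, hb2, _, h4⟩ := hmem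
  have hle : colH F b ≤ n := colH_le hF b
  by_cases hb : b = 1
  · subst hb; omega
  by_cases hb' : b ≤ n - 2
  · have := hmid b (by omega) hb'; omega
  · omega

lemma mem_np1 (b : ℕ) (hb : 1 ≤ b) (hbn : b ≤ n) (h : b + 1 ≤ colH F b) :
    (b + 1, b) ∈ _root_.diag n n (n+1) ∩ F := by
  rw [mem_diag_high hn hF (n+1) (by omega)]
  omega

lemma dnp1_good (hc1 : colH F 1 ≤ 2) (hmid : ∀ t, 2 ≤ t → t ≤ n - 2 → colH F t ≤ t) :
    (_root_.diag n n (n+1) ∩ F).card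
      = (if colH F 1 = 2 then 1 else 0) + (if colH F (n-1) = n then 1 else 0) := by
  have hlast := colH_last hF
  have hcle := colH_le hF (n-1)
  have hmemiff : ∀ a b : ℕ, ((a, b) ∈ _root_.diag n n (n+1) ∩ F ↔
      ((a = 2 ∧ b = 1) ∧ colH F 1 = 2) ∨ ((a = n ∧ b = n - 1) ∧ colH F (n-1) = n)) := by
    intro a b
    rw [mem_diag_high hn hF (n+1) (by omega)]
    constructor
    · rintro ⟨hb1, hb2, ha, h4⟩
      by_cases hb : b = 1
      · subst hb; left; omega
      by_cases hb' : b ≤ n - 2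
      · have := hmid b (by omega) hb'; omega
      by_cases hb'' : b = n - 1
      · subst hb''; right; omega
      · have hb3 : b = n := by omega
        subst hb3
        omega
    · rintro (⟨⟨ha, hb⟩, hc⟩ | ⟨⟨ha, hb⟩, hc⟩) <;> subst hb <;> omega
  by_cases h1 : colH F 1 = 2 <;> by_cases h2 : colH F (n-1) = n
  · have hset : _root_.diag n n (n+1) ∩ F = {(2, 1), (n, n-1)} := by
      ext ⟨a, b⟩
      rw [hmemiff]
      simp only [Finset.mem_insert, Finset.mem_singleton, Prod.mk.injEq]
      tauto
    rw [hset, h1, h2, if_pos rfl, if_pos rfl,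
      Finset.card_insert_of_notMem (by simp only [Finset.mem_singleton, Prod.mk.injEq]; omega),
      Finset.card_singleton]
  · have hset : _root_.diag n n (n+1) ∩ F = {(2, 1)} := by
      ext ⟨a, b⟩
      rw [hmemiff]
      simp only [Finset.mem_singleton, Prod.mk.injEq]
      tauto
    rw [hset, if_pos h1, if_neg h2, Finset.card_singleton]
  · have hset : _root_.diag n n (n+1) ∩ F = {(n, n-1)} := by
      ext ⟨a, b⟩
      rw [hmemiff]
      simp only [Finset.mem_singleton, Prod.mk.injEq]
      tauto
    rw [hset, if_neg h1, if_pos h2, Finset.card_singleton]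
  · have hset : _root_.diag n n (n+1) ∩ F = ∅ := by
      rw [Finset.eq_empty_iff_forall_notMem]
      rintro ⟨a, b⟩ hmem
      rw [hmemiff] at hmem
      tauto
    rw [hset, if_neg h1, if_neg h2, Finset.card_empty]

lemma E_good (hc1 : colH F 1 ≤ 2) (hmid : ∀ t, 2 ≤ t → t ≤ n - 2 → colH F t ≤ t) :
    ∑ r ∈ Finset.Icc (n+1) (n+n-1), min ((_root_.diag n n r ∩ F).card) 2
      = (if colH F 1 = 2 then 1 else 0) + (if colH F (n-1) = n then 1 else 0) := by
  rw [Finset.sum_eq_single_of_mem (n+1) (by rw [Finset.mem_Icc]; omega)]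
  · rw [dnp1_good hn hF hc1 hmid]
    split_ifs <;> omega
  · intro r hr hne
    rw [Finset.mem_Icc] at hr
    rw [dcnt_high_zero hn hF hc1 hmid r (by omega)]
    omega

lemma E_ge_of_dnp1 (k : ℕ) (hk : k ≤ 2) (h : k ≤ (_root_.diag n n (n+1) ∩ F).card) :
    k ≤ ∑ r ∈ Finset.Icc (n+1) (n+n-1), min ((_root_.diag n n r ∩ F).card) 2 := by
  have hterm : k ≤ min ((_root_.diag n n (n+1) ∩ F).card) 2 := by omega
  calc k ≤ min ((_root_.diag n n (n+1) ∩ F).card) 2 := hterm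
    _ ≤ _ := Finset.single_le_sum (f := fun r => min ((_root_.diag n n r ∩ F).card) 2)
      (fun i _ => Nat.zero_le _) (by rw [Finset.mem_Icc]; omega)

lemma E_ge_two_c13 (hc : 3 ≤ colH F 1) :
    2 ≤ ∑ r ∈ Finset.Icc (n+1) (n+n-1), min ((_root_.diag n n r ∩ F).card) 2 := by
  have hm1 : (2, 1) ∈ _root_.diag n n (n+1) ∩ F := mem_np1 hn hF 1 le_rfl (by omega) (by omega)
  have hm2 : (3, 1) ∈ _root_.diag n n (n+2) ∩ F := by
    rw [mem_diag_high hn hF (n+2) (by omega)]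
    omega
  have hc1 : 1 ≤ (_root_.diag n n (n+1) ∩ F).card := Finset.card_pos.2 ⟨_, hm1⟩
  have hc2 : 1 ≤ (_root_.diag n n (n+2) ∩ F).card := Finset.card_pos.2 ⟨_, hm2⟩
  have hsub : ({n+1, n+2} : Finset ℕ) ⊆ Finset.Icc (n+1) (n+n-1) := by
    intro x hx
    simp only [Finset.mem_insert, Finset.mem_singleton] at hx
    rw [Finset.mem_Icc]
    omega
  calc 2 ≤ ∑ r ∈ ({n+1, n+2} : Finset ℕ), min ((_root_.diag n n r ∩ F).card) 2 := by
        rw [Finset.sum_pair (by omega)]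
        omega
    _ ≤ _ := Finset.sum_le_sum_of_subset hsub

end Echunk

theorem mds_iff_good (hn : 3 ≤ n) (hF : IsFerrers n n F) :
    MDSConstructible n n F 3 ↔ GoodF n F := by
  have hK := kappa_eq (F := F) (n := n) hn
  have h0 := kappa0_id hn hF
  have h1 := kappa1_id hn hF
  have h2 := kappa2_id hn hF
  have hD := diagSum_id hF
  have hT := T_split hn hF
  have hSF := sum_colH hF
  have hcle := colH_le hF (n-1)
  have hc1pos := colH_one hF
  have hAle : ((Finset.Icc 1 n).filter (fun t => 2 ≤ colH F t)).card ≤ n := by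
    calc _ ≤ (Finset.Icc 1 n).card := Finset.card_filter_le _ _
      _ = n := by rw [Nat.card_Icc]; omega
  constructor
  · -- MDS → Good, by contradiction
    intro hM
    have hM' : kappa F n 3 = diagSum n n F 3 := hM
    by_contra hbad
    by_cases hc1 : colH F 1 ≤ 2
    · by_cases hmid : ∀ t, 2 ≤ t → t ≤ n - 2 → colH F t ≤ t
      · -- then ¬¬(c1 = 2 ∧ c(n-1) = n)
        have huv : colH F 1 = 2 ∧ colH F (n-1) = n := by
          by_contra h
          exact hbad ⟨hc1, hmid, h⟩
        have hE := E_good hn hF hc1 hmid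
        rw [if_pos huv.1, if_pos huv.2] at hE
        rw [hE] at hT
        rw [hT] at hD
        omega
      · -- middle violation
        push_neg at hmid
        obtain ⟨t, ht2, htn, htc⟩ := hmid
        have hmt : (t + 1, t) ∈ _root_.diag n n (n+1) ∩ F :=
          mem_np1 hn hF t (by omega) (by omega) (by omega)
        by_cases huv : colH F 1 = 2 ∨ colH F (n-1) = n
        · -- E ≥ 2, kappa ≥ S - 2n, diagSum ≤ S - 2n - 1
          have hm2 : 2 ≤ (_root_.diag n n (n+1) ∩ F).card := by
            rcases huv with hu | hv
            · have := mem_np1 hn hF 1 le_rfl (by omega) (by omega)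
              refine Finset.one_lt_card.2 ⟨_, hmt, _, this, ?_⟩
              simp only [ne_eq, Prod.mk.injEq]
              omega
            · have := mem_np1 hn hF (n-1) (by omega) (by omega) (by omega)
              refine Finset.one_lt_card.2 ⟨_, hmt, _, this, ?_⟩
              simp only [ne_eq, Prod.mk.injEq]
              omega
          have hE := E_ge_of_dnp1 hn hF 2 le_rfl hm2
          rw [hT] at hD
          omega
        · -- E ≥ 1, kappa ≥ S - (2n-1), diagSum ≤ S - 2n
          push_neg at huv
          have hAle' : ((Finset.Icc 1 n).filter (fun t => 2 ≤ colH F t)).card ≤ n - 1 := by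
            have hsub : ((Finset.Icc 1 n).filter (fun t => 2 ≤ colH F t)) ⊆ Finset.Icc 2 n := by
              intro x hx
              rw [Finset.mem_filter, Finset.mem_Icc] at hx
              rw [Finset.mem_Icc]
              have : x ≠ 1 := by
                rintro rfl
                omega
              omega
            calc _ ≤ (Finset.Icc 2 n).card := Finset.card_le_card hsub
              _ = n - 1 := by rw [Nat.card_Icc]; omega
          have hE := E_ge_of_dnp1 hn hF 1 (by omega) (Finset.card_pos.2 ⟨_, hmt⟩)
          rw [hT] at hD
          omega
    · -- c1 ≥ 3
      have hE := E_ge_two_c13 hn hF (by omega)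
      rw [hT] at hD
      omega
  · -- Good → MDS
    rintro ⟨hc1, hmid, hnot⟩
    show kappa F n 3 = diagSum n n F 3
    have hE := E_good hn hF hc1 hmid
    rw [hT, hE] at hD
    by_cases hu : colH F 1 = 2
    · have hv : colH F (n-1) ≠ n := fun h => hnot ⟨hu, h⟩
      rw [if_pos hu, if_neg hv] at hD
      have hAeq : ((Finset.Icc 1 n).filter (fun t => 2 ≤ colH F t)).card = n := by
        rw [Finset.filter_true_of_mem, Nat.card_Icc]
        · omega
        · intro t ht
          rw [Finset.mem_Icc] at ht
          have := colH_mono hF 1 t le_rfl ht.1 ht.2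
          omega
      omega
    · have hAle' : ((Finset.Icc 1 n).filter (fun t => 2 ≤ colH F t)).card ≤ n - 1 := by
        have hsub : ((Finset.Icc 1 n).filter (fun t => 2 ≤ colH F t)) ⊆ Finset.Icc 2 n := by
          intro x hx
          rw [Finset.mem_filter, Finset.mem_Icc] at hx
          rw [Finset.mem_Icc]
          have : x ≠ 1 := by
            rintro rfl
            omega
          omega
        calc _ ≤ (Finset.Icc 2 n).card := Finset.card_le_card hsub
          _ = n - 1 := by rw [Nat.card_Icc]; omega
      rw [if_neg hu] at hD
      by_cases hv : colH F (n-1) = n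
      · rw [if_pos hv] at hD
        omega
      · rw [if_neg hv] at hD
        omega

end MDS3


namespace MDS3

open Finset

variable {n : ℕ} {F F' : Finset (ℕ × ℕ)}

def buildF (n : ℕ) (c : ℕ → ℕ) : Finset (ℕ × ℕ) :=
  (board n n).filter (fun p => p.1 ≤ c p.2)

lemma mem_buildF (c : ℕ → ℕ) (a b : ℕ) :
    (a, b) ∈ buildF n c ↔ 1 ≤ a ∧ a ≤ n ∧ 1 ≤ b ∧ b ≤ n ∧ a ≤ c b := by
  simp only [buildF, board, Finset.mem_filter, Finset.mem_product, Finset.mem_Icc]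
  tauto

lemma isFerrers_buildF {c : ℕ → ℕ} (hn : 1 ≤ n) (hc1 : 1 ≤ c 1) (hcn : n ≤ c n)
    (hmono : ∀ j, 1 ≤ j → j + 1 ≤ n → c j ≤ c (j+1)) : IsFerrers n n (buildF n c) := by
  refine ⟨Finset.filter_subset _ _, ?_, ?_, ?_, ?_⟩
  · rw [mem_buildF]; omega
  · rw [mem_buildF]; omega
  · intro i j h hj
    rw [mem_buildF] at h ⊢
    have := hmono j (by omega) (by omega)
    omega
  · intro i j h hi
    rw [mem_buildF] at h ⊢
    omega

lemma colH_buildF {c : ℕ → ℕ} (hcb : ∀ j, 1 ≤ j → j ≤ n → c j ≤ n) (j : ℕ) :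
    colH (buildF n c) j = if 1 ≤ j ∧ j ≤ n then c j else 0 := by
  by_cases hj : 1 ≤ j ∧ j ≤ n
  · rw [if_pos hj]
    have hset : (buildF n c).filter (fun p => p.2 = j)
        = (Finset.Icc 1 (c j)).image (fun i => (i, j)) := by
      ext ⟨a, b⟩
      simp only [Finset.mem_filter, Finset.mem_image, Finset.mem_Icc]
      constructor
      · rintro ⟨hmem, hb⟩
        obtain rfl : b = j := hb
        rw [mem_buildF] at hmem
        exact ⟨a, ⟨by omega, by omega⟩, rfl⟩
      · rintro ⟨i, hi, heq⟩
        rw [Prod.mk.injEq] at heq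
        obtain ⟨rfl, rfl⟩ := heq
        refine ⟨(mem_buildF c i j).2 ⟨by omega, ?_, by omega, by omega, by omega⟩, rfl⟩
        have := hcb j hj.1 hj.2
        omega
    rw [colH, hset, Finset.card_image_of_injective _ (fun x y h => by
      simpa using h), Nat.card_Icc]
    omega
  · rw [if_neg hj]
    rw [colH, Finset.card_eq_zero, Finset.eq_empty_iff_forall_notMem]
    rintro ⟨a, b⟩ hmem
    rw [Finset.mem_filter, mem_buildF] at hmem
    obtain ⟨hm, hb⟩ := hmem
    obtain rfl : b = j := hb
    omega

lemma ferrers_ext (hF : IsFerrers n n F) (hF' : IsFerrers n n F')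
    (h : ∀ j, colH F j = colH F' j) : F = F' := by
  ext ⟨a, b⟩
  rw [mem_iff_colH hF, mem_iff_colH hF', h b]

def shiftc (n : ℕ) (c : ℕ → ℕ) : ℕ → ℕ :=
  fun t => if 1 ≤ t ∧ t ≤ n - 2 then c (t + 1) - 1 else 0

section classes

variable (hn : 3 ≤ n) (hF : IsFerrers n n F)
include hn hF

lemma stairP_class1 (hG : GoodF n F) (h2 : colH F (n-1) ≠ n) (h1 : colH F 1 ≠ 2) :
    StairP (n-1) (split1 (n-1) (colH F)) := by
  have hc1 : colH F 1 = 1 := by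
    have := colH_one hF
    have := hG.1
    omega
  refine ⟨?_, ?_, ?_⟩
  · intro t ht1 ht2
    simp only [split1, if_pos (And.intro ht1 ht2)]
    have hpos := colH_pos hF t ht1 (by omega)
    refine ⟨hpos, ?_⟩
    by_cases h : t = 1
    · subst h; omega
    by_cases h' : t ≤ n - 2
    · exact hG.2.1 t (by omega) h'
    · have := colH_le hF (n-1)
      have ht : t = n - 1 := by omega
      subst ht
      omega
  · intro t ht1 ht2
    simp only [split1]
    rw [if_pos (by omega : 1 ≤ t ∧ t ≤ n - 1), if_pos (by omega : 1 ≤ t + 1 ∧ t + 1 ≤ n - 1)]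
    exact colH_step hF t ht1 (by omega)
  · intro t ht
    simp only [split1]
    rw [if_neg (by omega)]

lemma stairP_class2 (hG : GoodF n F) (h2 : colH F (n-1) = n) :
    StairP (n-2) (split1 (n-2) (colH F)) := by
  have hc1 : colH F 1 = 1 := by
    have := colH_one hF
    have := hG.1
    have : colH F 1 ≠ 2 := fun h => hG.2.2 ⟨h, h2⟩
    omega
  refine ⟨?_, ?_, ?_⟩
  · intro t ht1 ht2
    simp only [split1, if_pos (And.intro ht1 ht2)]
    have hpos := colH_pos hF t ht1 (by omega)
    refine ⟨hpos, ?_⟩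
    by_cases h : t = 1
    · subst h; omega
    · exact hG.2.1 t (by omega) ht2
  · intro t ht1 ht2
    simp only [split1]
    rw [if_pos (by omega : 1 ≤ t ∧ t ≤ n - 2), if_pos (by omega : 1 ≤ t + 1 ∧ t + 1 ≤ n - 2)]
    exact colH_step hF t ht1 (by omega)
  · intro t ht
    simp only [split1]
    rw [if_neg (by omega)]

lemma stairP_class3 (hG : GoodF n F) (h1 : colH F 1 = 2) :
    StairP (n-2) (shiftc n (colH F)) := by
  have hv : colH F (n-1) ≠ n := fun h => hG.2.2 ⟨h1, h⟩
  have hmono2 : ∀ t, 1 ≤ t → t ≤ n - 1 → 2 ≤ colH F t := by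
    intro t ht1 ht2
    have := colH_mono hF 1 t le_rfl ht1 (by omega)
    omega
  refine ⟨?_, ?_, ?_⟩
  · intro t ht1 ht2
    simp only [shiftc, if_pos (And.intro ht1 ht2)]
    have h2t := hmono2 (t+1) (by omega) (by omega)
    refine ⟨by omega, ?_⟩
    by_cases h : t + 1 ≤ n - 2
    · have := hG.2.1 (t+1) (by omega) h
      omega
    · have hteq : t + 1 = n - 1 := by omega
      have := colH_le hF (n-1)
      rw [hteq]
      omega
  · intro t ht1 ht2
    simp only [shiftc]
    rw [if_pos (by omega : 1 ≤ t ∧ t ≤ n - 2), if_pos (by omega : 1 ≤ t + 1 ∧ t + 1 ≤ n - 2)]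
    have := colH_step hF (t+1) (by omega) (by omega)
    have := hmono2 (t+1) (by omega) (by omega)
    omega
  · intro t ht
    simp only [shiftc]
    rw [if_neg (by omega)]

end classes

end MDS3


namespace MDS3

open Finset

def Phi (n : ℕ) (hn : 3 ≤ n) :
    {F : Finset (ℕ × ℕ) // IsFerrers n n F ∧ GoodF n F} →
      ({c : ℕ → ℕ // StairP (n-1) c} ⊕
        ({c : ℕ → ℕ // StairP (n-2) c} ⊕ {c : ℕ → ℕ // StairP (n-2) c})) :=
  fun x =>
    if h2 : colH x.1 (n-1) = n then
      Sum.inr (Sum.inl ⟨split1 (n-2) (colH x.1), stairP_class2 hn x.2.1 x.2.2 h2⟩)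
    else if h1 : colH x.1 1 = 2 then
      Sum.inr (Sum.inr ⟨shiftc n (colH x.1), stairP_class3 hn x.2.1 x.2.2 h1⟩)
    else
      Sum.inl ⟨split1 (n-1) (colH x.1), stairP_class1 hn x.2.1 x.2.2 h2 h1⟩

lemma Phi_inj {n : ℕ} (hn : 3 ≤ n) : Function.Injective (Phi n hn) := by
  rintro ⟨F, hF, hG⟩ ⟨F', hF', hG'⟩ heq
  simp only [Phi] at heq
  apply Subtype.ext
  show F = F'
  by_cases h2 : colH F (n-1) = n <;> by_cases h2' : colH F' (n-1) = n
  · rw [dif_pos h2, dif_pos h2'] at heq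
    simp only [Sum.inr.injEq, Sum.inl.injEq, Subtype.mk.injEq] at heq
    refine ferrers_ext hF hF' ?_
    intro j
    have hpt := congrFun heq j
    simp only [split1] at hpt
    by_cases hj : 1 ≤ j ∧ j ≤ n - 2
    · rwa [if_pos hj, if_pos hj] at hpt
    · by_cases hj1 : j = n - 1
      · subst hj1; rw [h2, h2']
      · by_cases hjn : j = n
        · subst hjn; rw [colH_last hF, colH_last hF']
        · rw [colH_zero hF j (by omega), colH_zero hF' j (by omega)]
  · rw [dif_pos h2, dif_neg h2'] at heq
    by_cases h1' : colH F' 1 = 2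
    · rw [dif_pos h1'] at heq
      exact absurd heq (by simp)
    · rw [dif_neg h1'] at heq
      exact absurd heq (by simp)
  · rw [dif_neg h2, dif_pos h2'] at heq
    by_cases h1 : colH F 1 = 2
    · rw [dif_pos h1] at heq
      exact absurd heq (by simp)
    · rw [dif_neg h1] at heq
      exact absurd heq (by simp)
  · rw [dif_neg h2, dif_neg h2'] at heq
    by_cases h1 : colH F 1 = 2 <;> by_cases h1' : colH F' 1 = 2
    · rw [dif_pos h1, dif_pos h1'] at heq
      simp only [Sum.inr.injEq, Subtype.mk.injEq] at heq
      refine ferrers_ext hF hF' ?_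
      intro j
      by_cases hj : 2 ≤ j ∧ j ≤ n - 1
      · have hpt := congrFun heq (j - 1)
        simp only [shiftc] at hpt
        rw [if_pos (by omega : 1 ≤ j - 1 ∧ j - 1 ≤ n - 2),
            if_pos (by omega : 1 ≤ j - 1 ∧ j - 1 ≤ n - 2)] at hpt
        rw [show j - 1 + 1 = j by omega] at hpt
        have hm := colH_mono hF 1 j le_rfl (by omega) (by omega)
        have hm' := colH_mono hF' 1 j le_rfl (by omega) (by omega)
        omega
      · by_cases hj1 : j = 1
        · subst hj1; rw [h1, h1']
        · by_cases hjn : j = n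
          · subst hjn; rw [colH_last hF, colH_last hF']
          · rw [colH_zero hF j (by omega), colH_zero hF' j (by omega)]
    · rw [dif_pos h1, dif_neg h1'] at heq
      exact absurd heq (by simp)
    · rw [dif_neg h1, dif_pos h1'] at heq
      exact absurd heq (by simp)
    · rw [dif_neg h1, dif_neg h1'] at heq
      simp only [Sum.inl.injEq, Subtype.mk.injEq] at heq
      refine ferrers_ext hF hF' ?_
      intro j
      have hpt := congrFun heq j
      simp only [split1] at hpt
      by_cases hj : 1 ≤ j ∧ j ≤ n - 1
      · rwa [if_pos hj, if_pos hj] at hpt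
      · by_cases hjn : j = n
        · subst hjn; rw [colH_last hF, colH_last hF']
        · rw [colH_zero hF j (by omega), colH_zero hF' j (by omega)]

lemma Phi_surj {n : ℕ} (hn : 3 ≤ n) : Function.Surjective (Phi n hn) := by
  rintro (⟨b, hb⟩ | ⟨b, hb⟩ | ⟨b, hb⟩)
  -- Class 1 : c(n-1) ≤ n-1, c1 = 1
  · set c : ℕ → ℕ := fun t => if t = n then n else b t with hcdef
    have hb1 : b 1 = 1 := by have := hb.1 1 le_rfl (by omega); omega
    have hcval : ∀ t, 1 ≤ t → t ≤ n - 1 → c t = b t := by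
      intro t h1 h2; simp only [hcdef]; rw [if_neg (by omega)]
    have hcn : c n = n := by simp only [hcdef]; simp
    have hFer : IsFerrers n n (buildF n c) := by
      apply isFerrers_buildF (by omega)
      · rw [hcval 1 le_rfl (by omega), hb1]
      · rw [hcn]
      · intro j hj1 hj2
        rcases eq_or_ne (j+1) n with he | hne
        · have := hb.1 j hj1 (by omega)
          rw [hcval j hj1 (by omega), he, hcn]
          omega
        · rw [hcval j hj1 (by omega), hcval (j+1) (by omega) (by omega)]
          exact hb.2.1 j hj1 (by omega)
    have hcb : ∀ j, 1 ≤ j → j ≤ n → c j ≤ n := by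
      intro j h1 h2
      rcases eq_or_ne j n with rfl | hne
      · rw [hcn]
      · rw [hcval j h1 (by omega)]
        have := hb.1 j h1 (by omega)
        omega
    have hcolH := colH_buildF (n := n) (c := c) hcb
    have hcol1 : colH (buildF n c) 1 = 1 := by
      rw [hcolH 1, if_pos (by omega), hcval 1 le_rfl (by omega), hb1]
    have hcoln1 : colH (buildF n c) (n-1) = b (n-1) := by
      rw [hcolH (n-1), if_pos (by omega), hcval (n-1) (by omega) le_rfl]
    have hbn1 : b (n-1) ≤ n - 1 := (hb.1 (n-1) (by omega) le_rfl).2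
    have hGood : GoodF n (buildF n c) := by
      refine ⟨by omega, ?_, by omega⟩
      intro t ht1 ht2
      rw [hcolH t, if_pos (by omega), hcval t (by omega) (by omega)]
      exact (hb.1 t (by omega) (by omega)).2
    refine ⟨⟨buildF n c, hFer, hGood⟩, ?_⟩
    simp only [Phi]
    rw [dif_neg (by omega), dif_neg (by omega)]
    refine congrArg Sum.inl (Subtype.ext (funext fun t => ?_))
    simp only [split1]
    by_cases ht : 1 ≤ t ∧ t ≤ n - 1
    · rw [if_pos ht, hcolH t, if_pos (by omega), hcval t ht.1 ht.2]
    · rw [if_neg ht]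
      exact (hb.2.2 t (by omega)).symm
  -- Class 2 : c(n-1) = n, c1 = 1
  · set c : ℕ → ℕ := fun t => if t = n ∨ t = n - 1 then n else b t with hcdef
    have hb1 : b 1 = 1 := by have := hb.1 1 le_rfl (by omega); omega
    have hcval : ∀ t, 1 ≤ t → t ≤ n - 2 → c t = b t := by
      intro t h1 h2; simp only [hcdef]; rw [if_neg (by omega)]
    have hcn : c n = n := by simp only [hcdef]; simp
    have hcn1 : c (n-1) = n := by simp only [hcdef]; simp
    have hFer : IsFerrers n n (buildF n c) := by
      apply isFerrers_buildF (by omega)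
      · rw [hcval 1 le_rfl (by omega), hb1]
      · rw [hcn]
      · intro j hj1 hj2
        rcases eq_or_ne (j+1) n with he | hne
        · rw [he, hcn]
          rcases eq_or_ne j (n-1) with he' | hne'
          · rw [he', hcn1]
          · rw [hcval j hj1 (by omega)]
            have := hb.1 j hj1 (by omega)
            omega
        · rcases eq_or_ne (j+1) (n-1) with he' | hne'
          · rw [he', hcn1, hcval j hj1 (by omega)]
            have := hb.1 j hj1 (by omega)
            omega
          · rw [hcval j hj1 (by omega), hcval (j+1) (by omega) (by omega)]
            exact hb.2.1 j hj1 (by omega)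
    have hcb : ∀ j, 1 ≤ j → j ≤ n → c j ≤ n := by
      intro j h1 h2
      rcases eq_or_ne j n with rfl | hne
      · rw [hcn]
      · rcases eq_or_ne j (n-1) with rfl | hne'
        · rw [hcn1]
        · rw [hcval j h1 (by omega)]
          have := hb.1 j h1 (by omega)
          omega
    have hcolH := colH_buildF (n := n) (c := c) hcb
    have hcol1 : colH (buildF n c) 1 = 1 := by
      rw [hcolH 1, if_pos (by omega), hcval 1 le_rfl (by omega), hb1]
    have hcoln1 : colH (buildF n c) (n-1) = n := by
      rw [hcolH (n-1), if_pos (by omega), hcn1]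
    have hGood : GoodF n (buildF n c) := by
      refine ⟨by omega, ?_, by omega⟩
      intro t ht1 ht2
      rw [hcolH t, if_pos (by omega), hcval t (by omega) ht2]
      exact (hb.1 t (by omega) (by omega)).2
    refine ⟨⟨buildF n c, hFer, hGood⟩, ?_⟩
    simp only [Phi]
    rw [dif_pos hcoln1]
    refine congrArg Sum.inr (congrArg Sum.inl (Subtype.ext (funext fun t => ?_)))
    simp only [split1]
    by_cases ht : 1 ≤ t ∧ t ≤ n - 2
    · rw [if_pos ht, hcolH t, if_pos (by omega), hcval t ht.1 ht.2]
    · rw [if_neg ht]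
      exact (hb.2.2 t (by omega)).symm
  -- Class 3 : c1 = 2
  · set c : ℕ → ℕ := fun t => if t = n then n else if t = 1 then 2
      else if 2 ≤ t ∧ t ≤ n - 1 then b (t - 1) + 1 else 0 with hcdef
    have hb1 : b 1 = 1 := by have := hb.1 1 le_rfl (by omega); omega
    have hc1 : c 1 = 2 := by simp only [hcdef]; rw [if_neg (by omega)]; simp
    have hcn : c n = n := by simp only [hcdef]; simp
    have hcval : ∀ t, 2 ≤ t → t ≤ n - 1 → c t = b (t - 1) + 1 := by
      intro t h1 h2
      simp only [hcdef]
      rw [if_neg (by omega), if_neg (by omega), if_pos (And.intro h1 h2)]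
    have hbbd : ∀ t, 1 ≤ t → t ≤ n - 2 → 1 ≤ b t ∧ b t ≤ t := fun t h1 h2 => hb.1 t h1 h2
    have hFer : IsFerrers n n (buildF n c) := by
      apply isFerrers_buildF (by omega)
      · rw [hc1]; omega
      · rw [hcn]
      · intro j hj1 hj2
        rcases eq_or_ne (j+1) n with he | hne
        · rw [he, hcn]
          rcases eq_or_ne j 1 with rfl | hne'
          · rw [hc1]; omega
          · rw [hcval j (by omega) (by omega)]
            have := hbbd (j-1) (by omega) (by omega)
            omega
        · rcases eq_or_ne j 1 with rfl | hne'
          · rw [hc1, hcval 2 le_rfl (by omega)]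
            have : (2:ℕ) - 1 = 1 := by omega
            rw [this, hb1]
          · rw [hcval j (by omega) (by omega), hcval (j+1) (by omega) (by omega)]
            have hstep := hb.2.1 (j-1) (by omega) (by omega)
            rw [show j - 1 + 1 = j + 1 - 1 by omega] at hstep
            omega
    have hcb : ∀ j, 1 ≤ j → j ≤ n → c j ≤ n := by
      intro j h1 h2
      rcases eq_or_ne j n with rfl | hne
      · rw [hcn]
      · rcases eq_or_ne j 1 with rfl | hne'
        · rw [hc1]; omega
        · rw [hcval j (by omega) (by omega)]
          have := hbbd (j-1) (by omega) (by omega)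
          omega
    have hcolH := colH_buildF (n := n) (c := c) hcb
    have hcol1 : colH (buildF n c) 1 = 2 := by
      rw [hcolH 1, if_pos (by omega), hc1]
    have hcoln1 : colH (buildF n c) (n-1) = b (n-2) + 1 := by
      rw [hcolH (n-1), if_pos (by omega), hcval (n-1) (by omega) le_rfl,
        show n - 1 - 1 = n - 2 by omega]
    have hbn2 : b (n-2) ≤ n - 2 := (hbbd (n-2) (by omega) le_rfl).2
    have hGood : GoodF n (buildF n c) := by
      refine ⟨by omega, ?_, by omega⟩
      intro t ht1 ht2
      rw [hcolH t, if_pos (by omega), hcval t ht1 (by omega)]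
      have := hbbd (t-1) (by omega) (by omega)
      omega
    refine ⟨⟨buildF n c, hFer, hGood⟩, ?_⟩
    simp only [Phi]
    rw [dif_neg (by omega), dif_pos hcol1]
    refine congrArg Sum.inr (congrArg Sum.inr (Subtype.ext (funext fun t => ?_)))
    simp only [shiftc]
    by_cases ht : 1 ≤ t ∧ t ≤ n - 2
    · rw [if_pos ht, hcolH (t+1), if_pos (by omega), hcval (t+1) (by omega) (by omega),
        show t + 1 - 1 = t by omega]
      omega
    · rw [if_neg ht]
      exact (hb.2.2 t (by omega)).symm

end MDS3

theorem count_mds_constructible_d3 (n : ℕ) (hn : 3 ≤ n) :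
    Nat.card {F : Finset (ℕ × ℕ) // IsFerrers n n F ∧ MDSConstructible n n F 3}
      = (2 * n - 2).choose (n - 1) / n + 2 * ((2 * n - 4).choose (n - 2) / (n - 1)) := by
  classical
  have e1 : {F : Finset (ℕ × ℕ) // IsFerrers n n F ∧ MDSConstructible n n F 3} ≃
      {F : Finset (ℕ × ℕ) // IsFerrers n n F ∧ MDS3.GoodF n F} :=
    Equiv.subtypeEquivRight (fun F => and_congr_right (fun hF => MDS3.mds_iff_good hn hF))
  rw [Nat.card_congr e1,
    Nat.card_congr (Equiv.ofBijective (MDS3.Phi n hn) ⟨MDS3.Phi_inj hn, MDS3.Phi_surj hn⟩),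
    Nat.card_sum, Nat.card_sum, MDS3.card_stair, MDS3.card_stair]
  have h1 : catalan (n-1) = (2 * n - 2).choose (n - 1) / n := by
    rw [catalan_eq_centralBinom_div, Nat.centralBinom_eq_two_mul_choose,
      show 2 * (n-1) = 2 * n - 2 from by omega, show n - 1 + 1 = n from by omega]
  have h2 : catalan (n-2) = (2 * n - 4).choose (n - 2) / (n - 1) := by
    rw [catalan_eq_centralBinom_div, Nat.centralBinom_eq_two_mul_choose,
      show 2 * (n-2) = 2 * n - 4 from by omega, show n - 2 + 1 = n - 1 from by omega]
  omega
end

section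
/- Let q be a prime power, F an n × m Ferrers diagram, and 2 ≤ d ≤ min{n,m}, 1 ≤ k ≤ κ(F,d). The number of k-dimensional F_q-subspaces C of F_q[F] in which every nonzero matrix has rank at least d is at least [|F| choose k]_q − ((b_q(F,d-1)−1)/(q−1)) · [|F|−1 choose k−1]_q, where b_q(F,d-1) is the number of matrices in F_q[F] of rank at most d−1 and [a choose b]_q is the Gaussian binomial coefficient. -/
/-- The space `F_q[F]` of `n × m` matrices over `K` supported on `F` (1-based indexing). -/
def supportedSub (K : Type) [Field K] (n m : ℕ) (F : Finset (ℕ × ℕ)) :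
    Submodule K (Matrix (Fin n) (Fin m) K) where
  carrier := {M | ∀ (i : Fin n) (j : Fin m), ((i : ℕ) + 1, (j : ℕ) + 1) ∉ F → M i j = 0}
  add_mem' := by
    intro a b ha hb i j h
    simp only [Matrix.add_apply, ha i j h, hb i j h, add_zero]
  zero_mem' := by intro i j h; rfl
  smul_mem' := by
    intro c a ha i j h
    simp only [Matrix.smul_apply, ha i j h, smul_zero]

/-- The Gaussian binomial coefficient, via the $q$-Pascal identity. -/
def qBinom (q : ℕ) : ℕ → ℕ → ℕ
  | _, 0 => 1
  | 0, _ + 1 => 0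
  | a + 1, b + 1 => qBinom q a b + q ^ (b + 1) * qBinom q a (b + 1)


section Aux
open Module

lemma qBinom_zero (q N : ℕ) : qBinom q N 0 = 1 := by cases N <;> rfl
lemma qBinom_zero_succ (q k : ℕ) : qBinom q 0 (k+1) = 0 := rfl
lemma qBinom_succ_succ (q a b : ℕ) :
    qBinom q (a+1) (b+1) = qBinom q a b + q ^ (b + 1) * qBinom q a (b + 1) := rfl


lemma natCard_fibers_sum {α β : Type*} [Finite α] [Fintype β] (f : α → β) :
    Nat.card α = ∑ b : β, Nat.card {a // f a = b} := by
  classical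
  haveI := Fintype.ofFinite α
  rw [← Nat.card_congr (Equiv.sigmaFiberEquiv f), Nat.card_eq_fintype_card,
    Fintype.card_sigma]
  exact Finset.sum_congr rfl fun b _ => (Nat.card_eq_fintype_card).symm

lemma natCard_fibers_eq {α β : Type*} [Finite α] [Finite β] (f : α → β) (c : ℕ)
    (h : ∀ b, Nat.card {a // f a = b} = c) : Nat.card α = c * Nat.card β := by
  classical
  haveI := Fintype.ofFinite β
  rw [natCard_fibers_sum f]
  simp only [h, Finset.sum_const, smul_eq_mul, Finset.card_univ, Nat.card_eq_fintype_card]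
  exact Nat.mul_comm _ _

lemma natCard_fibers_le {α β : Type*} [Finite α] [Finite β] (f : α → β) (c : ℕ)
    (h : ∀ b, Nat.card {a // f a = b} ≤ c) : Nat.card α ≤ c * Nat.card β := by
  classical
  haveI := Fintype.ofFinite β
  rw [natCard_fibers_sum f]
  calc ∑ b : β, Nat.card {a // f a = b} ≤ ∑ _b : β, c := Finset.sum_le_sum fun b _ => h b
    _ = c * Nat.card β := by
        rw [Finset.sum_const, smul_eq_mul, Finset.card_univ, Nat.card_eq_fintype_card,
          Nat.mul_comm]

variable {K : Type} [Field K] [Fintype K]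

lemma card_linearMap (A B : Type*) [AddCommGroup A] [Module K A] [Module.Finite K A]
    [AddCommGroup B] [Module K B] [Module.Finite K B] :
    Nat.card (A →ₗ[K] B) = (Fintype.card K) ^ (finrank K A * finrank K B) := by
  classical
  haveI : Finite B := Module.finite_of_finite K
  haveI := Fintype.ofFinite B
  have e := ((Module.finBasis K A).constr K (M' := B)).toEquiv
  rw [← Nat.card_congr e]
  simp only [Nat.card_eq_fintype_card, Fintype.card_fun, Fintype.card_fin]
  rw [card_eq_pow_finrank (K := K) (V := B), ← pow_mul, Nat.mul_comm]

lemma card_isCompl {V : Type*} [AddCommGroup V] [Module K V] [Module.Finite K V]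
    (p : Submodule K V) :
    Nat.card {q // IsCompl p q} =
      (Fintype.card K) ^ (finrank K (V ⧸ p) * finrank K p) := by
  classical
  obtain ⟨c, hc⟩ := p.exists_isCompl
  let f0 := p.linearProjOfIsCompl c hc
  have hf0 : ∀ x : p, f0 (x : V) = x := fun x => p.linearProjOfIsCompl_apply_left hc x
  rw [← card_linearMap (V ⧸ p) p]
  refine Nat.card_congr ((p.isComplEquivProj).trans ?_)
  refine { toFun := fun f => p.liftQ ((f : V →ₗ[K] p) - f0) ?_,
           invFun := fun g => ⟨f0 + g.comp p.mkQ, ?_⟩,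
           left_inv := ?_, right_inv := ?_ }
  · intro x hx
    simp only [LinearMap.mem_ker, LinearMap.sub_apply]
    rw [f.2 ⟨x, hx⟩, hf0 ⟨x, hx⟩, sub_self]
  · intro x
    simp only [LinearMap.add_apply, LinearMap.comp_apply, hf0 x]
    rw [Submodule.mkQ_apply, (Submodule.Quotient.mk_eq_zero p).2 x.2, map_zero, add_zero]
  · intro f
    ext x
    simp [Submodule.liftQ_apply]
  · intro g
    apply LinearMap.ext
    refine fun x => Quotient.inductionOn' x (fun y => ?_)
    show p.liftQ _ _ (Submodule.Quotient.mk y) = _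
    simp only [Submodule.liftQ_apply, LinearMap.sub_apply, LinearMap.add_apply,
      LinearMap.comp_apply, Submodule.mkQ_apply]
    rw [add_sub_cancel_left]
    rfl

section FinrankLemmas
variable {V : Type*} [AddCommGroup V] [Module K V] [Module.Finite K V]

lemma finrank_comap_mkQ (L : Submodule K V) (U : Submodule K (V ⧸ L)) :
    finrank K (Submodule.comap L.mkQ U) = finrank K U + finrank K L := by
  set W := Submodule.comap L.mkQ U with hW
  have hL : L ≤ W := Submodule.le_comap_mkQ L U
  have h1 := LinearMap.finrank_range_add_finrank_ker (L.mkQ.domRestrict W)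
  rw [LinearMap.range_domRestrict, LinearMap.ker_domRestrict] at h1
  rw [Submodule.map_comap_eq, Submodule.range_mkQ, top_inf_eq, Submodule.ker_mkQ] at h1
  rw [(Submodule.comapSubtypeEquivOfLe hL).finrank_eq] at h1
  exact h1.symm

lemma finrank_map_mkQ_disjoint (L W : Submodule K V) (h : W ⊓ L = ⊥) :
    finrank K (Submodule.map L.mkQ W) = finrank K W := by
  have h1 := LinearMap.finrank_range_add_finrank_ker (L.mkQ.domRestrict W)
  rw [LinearMap.range_domRestrict, LinearMap.ker_domRestrict, Submodule.ker_mkQ] at h1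
  have hker : Submodule.comap W.subtype L = ⊥ := by
    rw [eq_bot_iff]
    rintro ⟨x, hxW⟩ hx
    have : x ∈ W ⊓ L := ⟨hxW, hx⟩
    rw [h] at this
    simpa [Submodule.mem_bot] using this
  rw [hker, finrank_bot] at h1
  simpa using h1

lemma isCompl_comap_subtype_iff (W' A B : Submodule K V) (hA : A ≤ W') (hB : B ≤ W') :
    IsCompl (Submodule.comap W'.subtype A) (Submodule.comap W'.subtype B) ↔
      (A ⊓ B = ⊥ ∧ A ⊔ B = W') := by
  rw [isCompl_iff, disjoint_iff, codisjoint_iff, ← Submodule.comap_inf]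
  constructor
  · rintro ⟨h1, h2⟩
    constructor
    · rw [eq_bot_iff]
      intro x hx
      have hxW : x ∈ W' := hA (hx.1)
      have : (⟨x, hxW⟩ : W') ∈ Submodule.comap W'.subtype (A ⊓ B) := hx
      rw [h1] at this
      simpa [Submodule.mem_bot] using this
    · apply le_antisymm (sup_le hA hB)
      intro x hx
      have : (⟨x, hx⟩ : W') ∈ (⊤ : Submodule K W') := trivial
      rw [← h2] at this
      obtain ⟨y, hy, z, hz, hyz⟩ := Submodule.mem_sup.1 this
      refine Submodule.mem_sup.2 ⟨y, hy, z, hz, ?_⟩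
      exact congrArg Subtype.val hyz
  · rintro ⟨h1, h2⟩
    constructor
    · rw [eq_bot_iff]
      rintro ⟨x, hxW⟩ hx
      have : x ∈ A ⊓ B := hx
      rw [h1] at this
      simpa [Submodule.mem_bot] using this
    · rw [eq_top_iff]
      rintro ⟨x, hxW⟩ _
      have hx : x ∈ A ⊔ B := h2 ▸ hxW
      obtain ⟨y, hy, z, hz, hyz⟩ := Submodule.mem_sup.1 hx
      refine Submodule.mem_sup.2 ⟨⟨y, hA hy⟩, hy, ⟨z, hB hz⟩, hz, ?_⟩
      exact Subtype.ext hyz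
end FinrankLemmas

lemma finite_submodule {V : Type*} [AddCommGroup V] [Module K V] [Module.Finite K V] :
    Finite (Submodule K V) := by
  haveI : Finite V := Module.finite_of_finite K
  exact Finite.of_injective (fun W => (W : Set V)) SetLike.coe_injective

lemma card_grassmannian (N : ℕ) :
    ∀ (V : Type) [AddCommGroup V] [Module K V] [Module.Finite K V], finrank K V = N →
      ∀ k : ℕ, Nat.card {W : Submodule K V // finrank K W = k}
        = qBinom (Fintype.card K) N k := by
  induction N with
  | zero =>
    intro V _ _ _ hV k
    match k with
    | 0 =>
      rw [qBinom_zero]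
      haveI : Unique {W : Submodule K V // finrank K W = 0} :=
        { default := ⟨⊥, by simp [finrank_bot]⟩
          uniq := fun W => Subtype.ext (Submodule.finrank_eq_zero.1 W.2) }
      exact Nat.card_unique
    | k + 1 =>
      rw [qBinom_zero_succ]
      haveI : IsEmpty {W : Submodule K V // finrank K W = k + 1} := by
        refine ⟨fun W => ?_⟩
        have h1 := Submodule.finrank_le W.1
        have h2 := W.2
        omega
      exact Nat.card_of_isEmpty
  | succ a ih =>
    intro V _ _ _ hV k
    haveI : Finite V := Module.finite_of_finite K
    haveI : Finite (Submodule K V) := finite_submodule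
    match k with
    | 0 =>
      rw [qBinom_zero]
      haveI : Unique {W : Submodule K V // finrank K W = 0} :=
        { default := ⟨⊥, by simp [finrank_bot]⟩
          uniq := fun W => Subtype.ext (Submodule.finrank_eq_zero.1 W.2) }
      exact Nat.card_unique
    | b + 1 =>
      classical
      have hnt : Nontrivial V := by
        rw [← Module.finrank_pos_iff (R := K)]
        omega
      obtain ⟨v, hv⟩ := exists_ne (0 : V)
      set L : Submodule K V := Submodule.span K {v} with hLdef
      have hL1 : finrank K L = 1 := finrank_span_singleton hv
      have hQ : finrank K (V ⧸ L) = a := by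
        have h := Submodule.finrank_quotient_add_finrank L
        omega
      haveI : Finite (Submodule K (V ⧸ L)) := finite_submodule
      -- split by whether L ≤ W
      have e0 := (Equiv.sumCompl
        (fun W : {W : Submodule K V // finrank K W = b + 1} => L ≤ W.1)).symm
      rw [Nat.card_congr e0, Nat.card_sum]
      -- Term 1: subspaces containing L
      have e1 : {U : Submodule K (V ⧸ L) // finrank K U = b} ≃
          {W : {W : Submodule K V // finrank K W = b + 1} // L ≤ W.1} := by
        refine Equiv.trans ?_ (Equiv.subtypeSubtypeEquivSubtypeInter
          (fun W : Submodule K V => finrank K W = b + 1) (fun W => L ≤ W)).symm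
        refine { toFun := fun U => ⟨Submodule.comap L.mkQ U.1, ?_, Submodule.le_comap_mkQ L _⟩,
                 invFun := fun W => ⟨Submodule.map L.mkQ W.1, ?_⟩,
                 left_inv := ?_, right_inv := ?_ }
        · have h := finrank_comap_mkQ L U.1
          rw [U.2, hL1] at h
          omega
        · have hcm : Submodule.comap L.mkQ (Submodule.map L.mkQ W.1) = W.1 := by
            rw [Submodule.comap_map_mkQ, sup_eq_right.2 W.2.2]
          have h := finrank_comap_mkQ L (Submodule.map L.mkQ W.1)
          rw [hcm, W.2.1, hL1] at h
          omega
        · rintro ⟨U, hU⟩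
          apply Subtype.ext
          simp only
          rw [Submodule.map_comap_eq, Submodule.range_mkQ, top_inf_eq]
        · rintro ⟨W, hWrk, hLW⟩
          apply Subtype.ext
          simp only
          rw [Submodule.comap_map_mkQ, sup_eq_right.2 hLW]
      rw [← Nat.card_congr e1, ih (V ⧸ L) hQ b]
      -- Term 2: subspaces not containing L
      have hdisj : ∀ W : Submodule K V, ¬ L ≤ W → W ⊓ L = ⊥ := by
        intro W hW
        have hv' : v ∉ W := fun h => hW ((Submodule.span_singleton_le_iff_mem v W).2 h)
        have : Disjoint W L := by
          rw [hLdef, Submodule.disjoint_span_singleton]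
          intro h; exact absurd h hv'
        exact disjoint_iff.1 this
      have key2 : Nat.card {W : {W : Submodule K V // finrank K W = b + 1} // ¬ L ≤ W.1}
          = Fintype.card K ^ (b + 1) * qBinom (Fintype.card K) a (b + 1) := by
        rw [← ih (V ⧸ L) hQ (b + 1)]
        refine natCard_fibers_eq
          (fun W : {W : {W : Submodule K V // finrank K W = b + 1} // ¬ L ≤ W.1} =>
            (⟨Submodule.map L.mkQ W.1.1, by
              rw [finrank_map_mkQ_disjoint L W.1.1 (hdisj W.1.1 W.2)]; exact W.1.2⟩ :
              {U : Submodule K (V ⧸ L) // finrank K U = b + 1}))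
          (Fintype.card K ^ (b + 1)) (fun U => ?_)
        -- count the fiber over U : complements of L inside W' := comap mkQ U
        set W' : Submodule K V := Submodule.comap L.mkQ U.1 with hW'def
        have hLW' : L ≤ W' := Submodule.le_comap_mkQ L U.1
        have hW'rk : finrank K W' = b + 2 := by
          have h := finrank_comap_mkQ L U.1
          rw [← hW'def] at h
          rw [U.2, hL1] at h
          omega
        have hL'1 : finrank K (Submodule.comap W'.subtype L) = 1 := by
          rw [(Submodule.comapSubtypeEquivOfLe hLW').finrank_eq, hL1]
        have efib : {W : {W : {W : Submodule K V // finrank K W = b + 1} // ¬ L ≤ W.1} //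
              Submodule.map L.mkQ W.1.1 = U.1} ≃
            {c : Submodule K W' // IsCompl (Submodule.comap W'.subtype L) c} := by
          refine { toFun := fun W => ⟨Submodule.comap W'.subtype W.1.1.1, ?_⟩,
                   invFun := fun c => ?_, left_inv := ?_, right_inv := ?_ }
          · -- complement property
            have hmap : Submodule.map L.mkQ W.1.1.1 = U.1 := W.2
            have hle : W.1.1.1 ≤ W' := Submodule.map_le_iff_le_comap.1 (le_of_eq hmap)
            rw [isCompl_comap_subtype_iff W' L W.1.1.1 hLW' hle]
            constructor
            · rw [inf_comm]; exact hdisj W.1.1.1 W.1.2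
            · rw [← Submodule.comap_map_mkQ L W.1.1.1, hmap]
          · -- from a complement to a fiber element
            have hcc : Submodule.comap W'.subtype (Submodule.map W'.subtype c.1) = c.1 := by
              rw [Submodule.comap_map_eq, Submodule.ker_subtype, sup_bot_eq]
            have hWle : Submodule.map W'.subtype c.1 ≤ W' := Submodule.map_subtype_le _ _
            have hc2 : IsCompl (Submodule.comap W'.subtype L)
                (Submodule.comap W'.subtype (Submodule.map W'.subtype c.1)) := by
              rw [hcc]; exact c.2
            rw [isCompl_comap_subtype_iff W' L _ hLW' hWle] at hc2
            have hinf := hc2.1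
            have hsup := hc2.2
            have hrk : finrank K (Submodule.map W'.subtype c.1) = b + 1 := by
              have h := Submodule.finrank_sup_add_finrank_inf_eq L (Submodule.map W'.subtype c.1)
              rw [hinf, hsup, hL1, hW'rk, finrank_bot] at h
              omega
            have hnotle : ¬ L ≤ Submodule.map W'.subtype c.1 := by
              intro h
              have : L = ⊥ := by rw [← hinf, inf_eq_left.2 h]
              rw [this, finrank_bot] at hL1
              exact absurd hL1.symm one_ne_zero
            refine ⟨⟨⟨Submodule.map W'.subtype c.1, hrk⟩, hnotle⟩, ?_⟩
            show Submodule.map L.mkQ (Submodule.map W'.subtype c.1) = U.1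
            have h1 : Submodule.map L.mkQ (L ⊔ Submodule.map W'.subtype c.1)
                = Submodule.map L.mkQ (Submodule.map W'.subtype c.1) := by
              rw [Submodule.map_sup, Submodule.mkQ_map_self, bot_sup_eq]
            rw [← h1, hsup, hW'def, Submodule.map_comap_eq, Submodule.range_mkQ, top_inf_eq]
          · -- left inverse
            rintro ⟨⟨⟨W, hWrk⟩, hnle⟩, hmap⟩
            have hle : W ≤ W' := Submodule.map_le_iff_le_comap.1 (le_of_eq hmap)
            apply Subtype.ext
            apply Subtype.ext
            apply Subtype.ext
            show Submodule.map W'.subtype (Submodule.comap W'.subtype W) = W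
            rw [Submodule.map_comap_subtype, inf_eq_right.2 hle]
          · -- right inverse
            rintro ⟨c, hc⟩
            apply Subtype.ext
            show Submodule.comap W'.subtype (Submodule.map W'.subtype c) = c
            rw [Submodule.comap_map_eq, Submodule.ker_subtype, sup_bot_eq]
        rw [Nat.card_congr (Equiv.trans (Equiv.subtypeEquivRight (fun W => Subtype.ext_iff)) efib),
          card_isCompl (Submodule.comap W'.subtype L), hL'1]
        congr 1
        have hqr := Submodule.finrank_quotient_add_finrank (Submodule.comap W'.subtype L)
        rw [hL'1, hW'rk] at hqr
        omega
      rw [key2, qBinom_succ_succ]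


set_option maxHeartbeats 1000000 in
lemma card_contain_line {V : Type} [AddCommGroup V] [Module K V] [Module.Finite K V]
    (L : Submodule K V) (hL1 : finrank K L = 1) (k : ℕ) :
    Nat.card {W : Submodule K V // finrank K W = k + 1 ∧ L ≤ W}
      = qBinom (Fintype.card K) (finrank K (V ⧸ L)) k := by
  rw [← card_grassmannian (finrank K (V ⧸ L)) (V ⧸ L) rfl k]
  refine (Nat.card_congr (?_ :
    {U : Submodule K (V ⧸ L) // finrank K U = k} ≃
      {W : Submodule K V // finrank K W = k + 1 ∧ L ≤ W})).symm
  refine { toFun := fun U => ⟨Submodule.comap L.mkQ U.1, ?_, Submodule.le_comap_mkQ L _⟩,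
           invFun := fun W => ⟨Submodule.map L.mkQ W.1, ?_⟩,
           left_inv := ?_, right_inv := ?_ }
  · have h := finrank_comap_mkQ L U.1
    rw [U.2, hL1] at h
    omega
  · have hcm : Submodule.comap L.mkQ (Submodule.map L.mkQ W.1) = W.1 := by
      rw [Submodule.comap_map_mkQ, sup_eq_right.2 W.2.2]
    have h := finrank_comap_mkQ L (Submodule.map L.mkQ W.1)
    rw [hcm, W.2.1, hL1] at h
    omega
  · rintro ⟨U, hU⟩
    apply Subtype.ext
    simp only
    rw [Submodule.map_comap_eq, Submodule.range_mkQ, top_inf_eq]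
  · rintro ⟨W, hWrk, hLW⟩
    apply Subtype.ext
    simp only
    rw [Submodule.comap_map_mkQ, sup_eq_right.2 hLW]

lemma matrix_rank_smul {n m : ℕ} (c : K) (hc : c ≠ 0) (M : Matrix (Fin n) (Fin m) K) :
    (c • M).rank = M.rank := by
  unfold Matrix.rank
  have h : (c • M).mulVecLin = c • M.mulVecLin := by
    ext v i
    simp [Matrix.mulVecLin, Matrix.smul_mulVec]
  rw [h, LinearMap.range_smul _ c hc]

lemma card_subspaces_of_sub {Mo : Type*} [AddCommGroup Mo] [Module K Mo]
    (V : Submodule K Mo) (j : ℕ) :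
    Nat.card {C : Submodule K Mo // C ≤ V ∧ finrank K C = j}
      = Nat.card {W : Submodule K V // finrank K W = j} := by
  refine (Nat.card_congr ?_).symm
  refine { toFun := fun W => ⟨Submodule.map V.subtype W.1, Submodule.map_subtype_le _ _, ?_⟩,
           invFun := fun C => ⟨Submodule.comap V.subtype C.1, ?_⟩,
           left_inv := ?_, right_inv := ?_ }
  · rw [← (Submodule.equivSubtypeMap V W.1).finrank_eq]
    exact W.2
  · rw [(Submodule.comapSubtypeEquivOfLe C.2.1).finrank_eq]
    exact C.2.2
  · rintro ⟨W, hW⟩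
    apply Subtype.ext
    show Submodule.comap V.subtype (Submodule.map V.subtype W) = W
    rw [Submodule.comap_map_eq, Submodule.ker_subtype, sup_bot_eq]
  · rintro ⟨C, hCV, hC⟩
    apply Subtype.ext
    show Submodule.map V.subtype (Submodule.comap V.subtype C) = C
    rw [Submodule.map_comap_subtype, inf_eq_right.2 hCV]

lemma card_subspaces_line_of_sub {Mo : Type*} [AddCommGroup Mo] [Module K Mo]
    (V L : Submodule K Mo) (hLV : L ≤ V) (j : ℕ) :
    Nat.card {C : Submodule K Mo // (C ≤ V ∧ finrank K C = j) ∧ L ≤ C}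
      = Nat.card {W : Submodule K V // finrank K W = j ∧ Submodule.comap V.subtype L ≤ W} := by
  have hmapL : Submodule.map V.subtype (Submodule.comap V.subtype L) = L := by
    rw [Submodule.map_comap_subtype, inf_eq_right.2 hLV]
  refine (Nat.card_congr ?_).symm
  refine { toFun := fun W => ⟨Submodule.map V.subtype W.1,
             ⟨Submodule.map_subtype_le _ _, ?_⟩, ?_⟩,
           invFun := fun C => ⟨Submodule.comap V.subtype C.1, ?_, ?_⟩,
           left_inv := ?_, right_inv := ?_ }
  · rw [← (Submodule.equivSubtypeMap V W.1).finrank_eq]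
    exact W.2.1
  · exact le_of_eq_of_le hmapL.symm (Submodule.map_mono W.2.2)
  · rw [(Submodule.comapSubtypeEquivOfLe C.2.1.1).finrank_eq]
    exact C.2.1.2
  · exact Submodule.comap_mono C.2.2
  · rintro ⟨W, hW⟩
    apply Subtype.ext
    show Submodule.comap V.subtype (Submodule.map V.subtype W) = W
    rw [Submodule.comap_map_eq, Submodule.ker_subtype, sup_bot_eq]
  · rintro ⟨C, hC⟩
    apply Subtype.ext
    show Submodule.map V.subtype (Submodule.comap V.subtype C) = C
    rw [Submodule.map_comap_subtype, inf_eq_right.2 hC.1.1]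

lemma finrank_supportedSub (n m : ℕ) (F : Finset (ℕ × ℕ)) (hF : ↑F ⊆ (board n m : Finset (ℕ × ℕ))) :
    finrank K (supportedSub K n m F) = F.card := by
  classical
  have hbd : ∀ p : ℕ × ℕ, p ∈ F → (1 ≤ p.1 ∧ p.1 ≤ n) ∧ (1 ≤ p.2 ∧ p.2 ≤ m) := by
    intro p hp
    have := hF hp
    simp only [board, Finset.mem_product, Finset.mem_Icc] at this
    exact this
  let Φ : supportedSub K n m F →ₗ[K] ({p : ℕ × ℕ // p ∈ F} → K) :=
    { toFun := fun M p =>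
        M.1 ⟨p.1.1 - 1, by have := (hbd p.1 p.2).1; omega⟩ ⟨p.1.2 - 1, by have := (hbd p.1 p.2).2; omega⟩
      map_add' := fun a b => rfl
      map_smul' := fun c a => rfl }
  have hbij : Function.Bijective Φ := by
    constructor
    · intro M N h
      apply Subtype.ext
      ext i j
      by_cases hm : ((i : ℕ) + 1, (j : ℕ) + 1) ∈ F
      · have := congrFun h ⟨((i : ℕ) + 1, (j : ℕ) + 1), hm⟩
        exact this
      · rw [M.2 i j hm, N.2 i j hm]
    · intro f
      refine ⟨⟨fun i j => if h : ((i : ℕ) + 1, (j : ℕ) + 1) ∈ F then f ⟨_, h⟩ else 0, ?_⟩, ?_⟩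
      · intro i j h
        exact dif_neg h
      · ext p
        obtain ⟨⟨a, b⟩, hp⟩ := p
        have hb := hbd (a, b) hp
        show (if h : _ ∈ F then f ⟨_, h⟩ else 0) = f ⟨(a, b), hp⟩
        have h1 : a - 1 + 1 = a := by omega
        have h2 : b - 1 + 1 = b := by omega
        have hmem : (a - 1 + 1, b - 1 + 1) ∈ F := by rw [h1, h2]; exact hp
        rw [dif_pos hmem]
        congr 1
        exact Subtype.ext (by simp [h1, h2])
  rw [(LinearEquiv.ofBijective Φ hbij).finrank_eq, Module.finrank_pi, Fintype.card_coe]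

end Aux

set_option maxHeartbeats 1000000 in
set_option synthInstance.maxHeartbeats 400000 in
open Module in
theorem count_Fd_spaces_lower_bound (q : ℕ) (hq' : ∃ p e : ℕ, p.Prime ∧ 0 < e ∧ q = p ^ e)
    (K : Type) [Field K] [Fintype K] (hq : Fintype.card K = q)
    (n m : ℕ) (F : Finset (ℕ × ℕ)) (hF : IsFerrers n m F)
    (d k : ℕ) (hd1 : 2 ≤ d) (hd2 : d ≤ min n m) (hk1 : 1 ≤ k) (hk2 : k ≤ kappa F m d) :
    (qBinom q F.card k : ℤ) -
        (((Nat.card {M : Matrix (Fin n) (Fin m) K //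
            M ∈ supportedSub K n m F ∧ M.rank ≤ d - 1} - 1) / (q - 1) : ℕ) : ℤ) *
          (qBinom q (F.card - 1) (k - 1) : ℤ)
      ≤ (Nat.card {C : Submodule K (Matrix (Fin n) (Fin m) K) //
          C ≤ supportedSub K n m F ∧ Module.finrank K C = k ∧
          ∀ M ∈ C, M ≠ 0 → d ≤ Matrix.rank M} : ℤ) := by
  classical
  subst hq
  obtain ⟨k', rfl⟩ : ∃ k', k = k' + 1 := ⟨k - 1, by omega⟩
  set V := supportedSub K n m F with hVdef
  haveI : Finite (Matrix (Fin n) (Fin m) K) := Module.finite_of_finite K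
  haveI : Finite (Submodule K (Matrix (Fin n) (Fin m) K)) := finite_submodule
  have hq2 : 2 ≤ Fintype.card K := Fintype.one_lt_card
  have hVrk : finrank K V = F.card := finrank_supportedSub n m F hF.1
  -- the set of "bad lines"
  set Λ := {ℓ : Submodule K (Matrix (Fin n) (Fin m) K) //
    ∃ M0 : Matrix (Fin n) (Fin m) K,
      ((M0 ∈ V ∧ M0.rank ≤ d - 1) ∧ M0 ≠ 0) ∧ ℓ = Submodule.span K {M0}} with hΛdef
  -- b = #nonzero low-rank matrices + 1
  have hrankzero : (0 : Matrix (Fin n) (Fin m) K) ∈ V ∧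
      Matrix.rank (0 : Matrix (Fin n) (Fin m) K) ≤ d - 1 :=
    ⟨V.zero_mem, by rw [Matrix.rank_zero]; exact Nat.zero_le _⟩
  have hb : Nat.card {M : Matrix (Fin n) (Fin m) K // M ∈ V ∧ M.rank ≤ d - 1}
      = Nat.card {M : Matrix (Fin n) (Fin m) K // (M ∈ V ∧ M.rank ≤ d - 1) ∧ M ≠ 0} + 1 := by
    rw [← Nat.card_congr (Equiv.sumCompl
      (fun x : {M : Matrix (Fin n) (Fin m) K // M ∈ V ∧ M.rank ≤ d - 1} => x.1 ≠ 0)),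
      Nat.card_sum]
    congr 1
    · exact Nat.card_congr (Equiv.subtypeSubtypeEquivSubtypeInter
        (fun M : Matrix (Fin n) (Fin m) K => M ∈ V ∧ M.rank ≤ d - 1) (fun M => M ≠ 0))
    · haveI : Unique {x : {M : Matrix (Fin n) (Fin m) K // M ∈ V ∧ M.rank ≤ d - 1} //
          ¬ x.1 ≠ 0} :=
        { default := ⟨⟨0, hrankzero⟩, by simp⟩
          uniq := fun x => Subtype.ext (Subtype.ext (not_not.1 x.2)) }
      exact Nat.card_unique
  -- each bad line contains exactly q - 1 nonzero low-rank matrices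
  have hΛS : Nat.card {M : Matrix (Fin n) (Fin m) K // (M ∈ V ∧ M.rank ≤ d - 1) ∧ M ≠ 0}
      = (Fintype.card K - 1) * Nat.card Λ := by
    refine natCard_fibers_eq
      (fun M : {M : Matrix (Fin n) (Fin m) K // (M ∈ V ∧ M.rank ≤ d - 1) ∧ M ≠ 0} =>
        (⟨Submodule.span K {M.1}, ⟨M.1, M.2, rfl⟩⟩ : Λ)) _ (fun ℓ => ?_)
    obtain ⟨M0, hM0, hsp⟩ := ℓ.2
    have hℓrk : finrank K ℓ.1 = 1 := by rw [hsp]; exact finrank_span_singleton hM0.2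
    have hℓV : ℓ.1 ≤ V := by
      rw [hsp]; exact (Submodule.span_singleton_le_iff_mem M0 V).2 hM0.1.1
    have efib : {M : {M : Matrix (Fin n) (Fin m) K //
          (M ∈ V ∧ M.rank ≤ d - 1) ∧ M ≠ 0} //
          (⟨Submodule.span K {M.1}, ⟨M.1, M.2, rfl⟩⟩ : Λ) = ℓ} ≃
        {x : ℓ.1 // x ≠ 0} := by
      refine { toFun := fun M => ⟨⟨M.1.1, ?_⟩, fun h0 => M.1.2.2 (congrArg Subtype.val h0)⟩,
               invFun := fun x => ⟨⟨x.1.1, ?_, fun h => x.2 (Subtype.ext h)⟩, ?_⟩,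
               left_inv := fun M => Subtype.ext (Subtype.ext rfl),
               right_inv := fun x => Subtype.ext (Subtype.ext rfl) }
      · have h := congrArg Subtype.val M.2
        exact h ▸ Submodule.mem_span_singleton_self _
      · -- x.1.1 satisfies the low-rank conditions
        have hx : x.1.1 ∈ Submodule.span K {M0} := by rw [← hsp]; exact x.1.2
        obtain ⟨c, hc⟩ := Submodule.mem_span_singleton.1 hx
        have hc0 : c ≠ 0 := by
          rintro rfl
          exact x.2 (Subtype.ext (by rw [← hc, zero_smul]; simp))
        constructor
        · exact hℓV x.1.2
        · rw [← hc, matrix_rank_smul c hc0]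
          exact hM0.1.2
      · -- the span is ℓ
        apply Subtype.ext
        show Submodule.span K {x.1.1} = ℓ.1
        have hx : x.1.1 ∈ Submodule.span K {M0} := by rw [← hsp]; exact x.1.2
        obtain ⟨c, hc⟩ := Submodule.mem_span_singleton.1 hx
        have hc0 : c ≠ 0 := by
          rintro rfl
          exact x.2 (Subtype.ext (by rw [← hc, zero_smul]; simp))
        have h2 : Submodule.span K {(x.1.1 : Matrix (Fin n) (Fin m) K)}
            = Submodule.span K {c • M0} := by rw [hc]
        rw [h2, Submodule.span_singleton_smul_eq (isUnit_iff_ne_zero.2 hc0)]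
        exact hsp.symm
    rw [Nat.card_congr efib]
    haveI := Fintype.ofFinite ℓ.1
    rw [Nat.card_eq_fintype_card, Fintype.card_subtype_compl, Fintype.card_subtype_eq,
      card_eq_pow_finrank (K := K), hℓrk, pow_one]
  -- count of all k-dimensional subspaces of V
  have hTot : Nat.card {C : Submodule K (Matrix (Fin n) (Fin m) K) //
        C ≤ V ∧ finrank K C = k' + 1} = qBinom (Fintype.card K) F.card (k' + 1) := by
    rw [card_subspaces_of_sub V (k' + 1)]
    exact card_grassmannian F.card V hVrk (k' + 1)
  -- count of k-dimensional subspaces of V containing a fixed bad line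
  have hline : ∀ ℓ : Λ, Nat.card {C : Submodule K (Matrix (Fin n) (Fin m) K) //
        (C ≤ V ∧ finrank K C = k' + 1) ∧ ℓ.1 ≤ C}
      = qBinom (Fintype.card K) (F.card - 1) k' := by
    intro ℓ
    obtain ⟨M0, hM0, hsp⟩ := ℓ.2
    have hℓV : ℓ.1 ≤ V := by
      rw [hsp]; exact (Submodule.span_singleton_le_iff_mem M0 V).2 hM0.1.1
    have hℓrk : finrank K ℓ.1 = 1 := by rw [hsp]; exact finrank_span_singleton hM0.2
    rw [card_subspaces_line_of_sub V ℓ.1 hℓV (k' + 1)]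
    have hLw : finrank K (Submodule.comap V.subtype ℓ.1) = 1 := by
      rw [(Submodule.comapSubtypeEquivOfLe hℓV).finrank_eq, hℓrk]
    rw [card_contain_line (Submodule.comap V.subtype ℓ.1) hLw k']
    congr 1
    have h := Submodule.finrank_quotient_add_finrank (Submodule.comap V.subtype ℓ.1)
    rw [hLw, hVrk] at h
    omega
  -- the number of bad subspaces is at most (lines) * (subspaces through a line)
  have hBad : Nat.card {C : Submodule K (Matrix (Fin n) (Fin m) K) //
        (C ≤ V ∧ finrank K C = k' + 1) ∧ ∃ M, M ∈ C ∧ M ≠ 0 ∧ Matrix.rank M ≤ d - 1}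
      ≤ qBinom (Fintype.card K) (F.card - 1) k' * Nat.card Λ := by
    refine natCard_fibers_le
      (fun C : {C : Submodule K (Matrix (Fin n) (Fin m) K) //
          (C ≤ V ∧ finrank K C = k' + 1) ∧ ∃ M, M ∈ C ∧ M ≠ 0 ∧ Matrix.rank M ≤ d - 1} =>
        (⟨Submodule.span K {Classical.choose C.2.2},
          ⟨Classical.choose C.2.2,
            ⟨⟨C.2.1.1 (Classical.choose_spec C.2.2).1,
              (Classical.choose_spec C.2.2).2.2⟩,
              (Classical.choose_spec C.2.2).2.1⟩, rfl⟩⟩ : Λ)) _ (fun ℓ => ?_)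
    rw [← hline ℓ]
    refine Nat.card_le_card_of_injective (fun x => ⟨x.1.1, x.1.2.1, ?_⟩) ?_
    · have h := congrArg Subtype.val x.2
      rw [← h]
      exact (Submodule.span_singleton_le_iff_mem _ _).2 (Classical.choose_spec x.1.2.2).1
    · intro a b hab
      have h : a.1.1 = b.1.1 := Subtype.mk_eq_mk.1 hab
      exact Subtype.ext (Subtype.ext h)
  -- partition into good and bad subspaces
  have hpart : Nat.card {C : Submodule K (Matrix (Fin n) (Fin m) K) //
        C ≤ V ∧ finrank K C = k' + 1}
      = Nat.card {C : Submodule K (Matrix (Fin n) (Fin m) K) //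
          C ≤ V ∧ finrank K C = k' + 1 ∧ ∀ M ∈ C, M ≠ 0 → d ≤ Matrix.rank M}
        + Nat.card {C : Submodule K (Matrix (Fin n) (Fin m) K) //
          (C ≤ V ∧ finrank K C = k' + 1) ∧ ∃ M, M ∈ C ∧ M ≠ 0 ∧ Matrix.rank M ≤ d - 1} := by
    rw [← Nat.card_congr (Equiv.sumCompl
      (fun x : {C : Submodule K (Matrix (Fin n) (Fin m) K) // C ≤ V ∧ finrank K C = k' + 1} =>
        ∀ M ∈ x.1, M ≠ 0 → d ≤ Matrix.rank M)), Nat.card_sum]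
    congr 1
    · refine Nat.card_congr ((Equiv.subtypeSubtypeEquivSubtypeInter
        (fun C : Submodule K (Matrix (Fin n) (Fin m) K) => C ≤ V ∧ finrank K C = k' + 1)
        (fun C => ∀ M ∈ C, M ≠ 0 → d ≤ Matrix.rank M)).trans
        (Equiv.subtypeEquivRight fun C => ?_))
      constructor
      · rintro ⟨⟨h1, h2⟩, h3⟩; exact ⟨h1, h2, h3⟩
      · rintro ⟨h1, h2, h3⟩; exact ⟨⟨h1, h2⟩, h3⟩
    · refine Nat.card_congr ((Equiv.subtypeSubtypeEquivSubtypeInter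
        (fun C : Submodule K (Matrix (Fin n) (Fin m) K) => C ≤ V ∧ finrank K C = k' + 1)
        (fun C => ¬ ∀ M ∈ C, M ≠ 0 → d ≤ Matrix.rank M)).trans
        (Equiv.subtypeEquivRight fun C => ?_))
      constructor
      · rintro ⟨⟨h1, h2⟩, h3⟩
        refine ⟨⟨h1, h2⟩, ?_⟩
        push_neg at h3
        obtain ⟨M, hM, hne, hrk⟩ := h3
        exact ⟨M, hM, hne, by omega⟩
      · rintro ⟨⟨h1, h2⟩, M, hM, hne, hrk⟩
        refine ⟨⟨h1, h2⟩, ?_⟩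
        intro hP
        have := hP M hM hne
        omega
  -- conclude
  have hΛval : Nat.card Λ =
      (Nat.card {M : Matrix (Fin n) (Fin m) K // M ∈ V ∧ M.rank ≤ d - 1} - 1)
        / (Fintype.card K - 1) := by
    rw [hb, Nat.add_sub_cancel, hΛS, Nat.mul_div_cancel_left _ (by omega)]
  rw [← hΛval, Nat.add_sub_cancel, ← hTot, hpart]
  have hBadZ : (Nat.card {C : Submodule K (Matrix (Fin n) (Fin m) K) //
        (C ≤ V ∧ finrank K C = k' + 1) ∧ ∃ M, M ∈ C ∧ M ≠ 0 ∧ Matrix.rank M ≤ d - 1} : ℤ)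
      ≤ (qBinom (Fintype.card K) (F.card - 1) k' : ℤ) * (Nat.card Λ : ℤ) := by
    exact_mod_cast hBad
  push_cast
  linarith [hBadZ]
end
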